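/- arXiv:0912.5114 — 5 statements merged into one kernel-verified Lean document; each statement's English description precedes it below -/
import Mathlib

section
/- Let ℓ ≥ 1, n ≥ 1, and let U ⊆ ℝⁿ be open with coordinates u₁,…,uₙ. Let γ : U → Matrix (Fin n) (Fin n) ℝ be smooth with γᵢⱼ = γⱼᵢ for i ≠ j, and let Ψ₀, Ψ₁, …, Ψ_ℓ : U → Matrix (Fin n) (Fin n) ℝ be smooth maps with Ψ₀(u) invertible for all u, satisfying: (i) ∂Ψ_d/∂u_k = E_kk·Ψ_{d−1} + (γ·E_kk − E_kk·γ)·Ψ_d for all 0 ≤ d ≤ ℓ and all k (with the convention Ψ_{−1} = 0); (ii) for every m with 0 ≤ m ≤ ℓ, ∑_{a+b=m} (−1)^a Ψ_aᵀ·Ψ_b equals the identity if m = 0 and equals 0 if m ≥ 1, and likewise ∑_{a+b=m} (−1)^a Ψ_a·Ψ_bᵀ equals the identity if m = 0 and 0 if m ≥ 1. Let r be a constant n×n real matrix with rᵀ = (−1)^{ℓ+1} r (symmetric for odd ℓ, skew-symmetric for even ℓ). Let δΨ₀, δγ : U → Matrix (Fin n) (Fin n) ℝ be smooth and suppose: δΨ₀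 = Ψ_ℓ·r − ∑_{p=1}^{ℓ} ∑_{q=0}^{ℓ−p} (−1)^{ℓ−p−q} Ψ_q·r·Ψ_{ℓ−p−q}ᵀ·Ψ_p, and ∂(δΨ₀)/∂u_k = (δγ·E_kk − E_kk·δγ)·Ψ₀ + (γ·E_kk − E_kk·γ)·δΨ₀ for all k. Then for all i ≠ j: (δγ)ᵢⱼ = (∑_{a+b=ℓ−1, a,b ≥ 0} (−1)^{b−1} Ψ_a·r·Ψ_bᵀ)ᵢⱼ. -/
open Matrix

/-- Partial derivative of a scalar function on `ℝⁿ` in the `k`-th coordinate direction. -/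
noncomputable def pd {n : ℕ} (k : Fin n) (f : (Fin n → ℝ) → ℝ) (u : Fin n → ℝ) : ℝ :=
  fderiv ℝ f u (Pi.single k 1)


namespace PdAux
variable {n : ℕ}

noncomputable def pdM (k : Fin n) (F : (Fin n → ℝ) → Matrix (Fin n) (Fin n) ℝ)
    (u : Fin n → ℝ) : Matrix (Fin n) (Fin n) ℝ :=
  Matrix.of fun i j => pd k (fun v => F v i j) u

def DAt (F : (Fin n → ℝ) → Matrix (Fin n) (Fin n) ℝ) (u : Fin n → ℝ) : Prop :=
  ∀ i j, DifferentiableAt ℝ (fun v => F v i j) u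

lemma pd_congr {k : Fin n} {f g : (Fin n → ℝ) → ℝ} {u : Fin n → ℝ}
    (h : f =ᶠ[nhds u] g) : pd k f u = pd k g u := by
  unfold pd; rw [h.fderiv_eq]

lemma pd_mul {k : Fin n} {f g : (Fin n → ℝ) → ℝ} {u : Fin n → ℝ}
    (hf : DifferentiableAt ℝ f u) (hg : DifferentiableAt ℝ g u) :
    pd k (fun v => f v * g v) u = pd k f u * g u + f u * pd k g u := by
  unfold pd
  rw [fderiv_fun_mul hf hg]
  simp [add_comm, mul_comm]

lemma pd_sum {k : Fin n} {s : Finset (Fin n)} {f : Fin n → (Fin n → ℝ) → ℝ} {u : Fin n → ℝ}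
    (hf : ∀ x ∈ s, DifferentiableAt ℝ (f x) u) :
    pd k (fun v => ∑ x ∈ s, f x v) u = ∑ x ∈ s, pd k (f x) u := by
  unfold pd
  rw [fderiv_fun_sum hf]
  simp

lemma DAt.mul {F G : (Fin n → ℝ) → Matrix (Fin n) (Fin n) ℝ} {u : Fin n → ℝ}
    (hF : DAt F u) (hG : DAt G u) : DAt (fun v => F v * G v) u := by
  intro i j
  simp only [Matrix.mul_apply]
  exact DifferentiableAt.fun_sum fun x _ => (hF i x).fun_mul (hG x j)

lemma DAt.transpose {F : (Fin n → ℝ) → Matrix (Fin n) (Fin n) ℝ} {u : Fin n → ℝ}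
    (hF : DAt F u) : DAt (fun v => (F v)ᵀ) u := fun i j => hF j i

lemma DAt.const (A : Matrix (Fin n) (Fin n) ℝ) (u : Fin n → ℝ) :
    DAt (fun _ => A) u := fun i j => differentiableAt_const _

lemma DAt.smul {F : (Fin n → ℝ) → Matrix (Fin n) (Fin n) ℝ} {u : Fin n → ℝ} (c : ℝ)
    (hF : DAt F u) : DAt (fun v => c • F v) u := by
  intro i j
  simp only [Matrix.smul_apply, smul_eq_mul]
  exact (hF i j).const_mul c

lemma DAt.sub {F G : (Fin n → ℝ) → Matrix (Fin n) (Fin n) ℝ} {u : Fin n → ℝ}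
    (hF : DAt F u) (hG : DAt G u) : DAt (fun v => F v - G v) u := by
  intro i j
  simp only [Matrix.sub_apply]
  exact (hF i j).sub (hG i j)

lemma DAt.finsum {β : Type*} {s : Finset β} {F : β → (Fin n → ℝ) → Matrix (Fin n) (Fin n) ℝ}
    {u : Fin n → ℝ} (hF : ∀ x ∈ s, DAt (F x) u) : DAt (fun v => ∑ x ∈ s, F x v) u := by
  intro i j
  simp only [Matrix.sum_apply]
  exact DifferentiableAt.fun_sum fun x hx => hF x hx i j

lemma pdM_mul {k : Fin n} {F G : (Fin n → ℝ) → Matrix (Fin n) (Fin n) ℝ} {u : Fin n → ℝ}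
    (hF : DAt F u) (hG : DAt G u) :
    pdM k (fun v => F v * G v) u = pdM k F u * G u + F u * pdM k G u := by
  ext i j
  simp only [pdM, Matrix.of_apply, Matrix.add_apply, Matrix.mul_apply]
  have : (fun v => (F v * G v) i j) = fun v => ∑ x : Fin n, F v i x * G v x j := by
    funext v; simp [Matrix.mul_apply]
  rw [show (fun v => ∑ j_1 : Fin n, F v i j_1 * G v j_1 j) = fun v => ∑ x : Fin n, F v i x * G v x j from rfl,
    pd_sum (fun x _ => (hF i x).fun_mul (hG x j)), ← Finset.sum_add_distrib]
  refine Finset.sum_congr rfl fun x _ => ?_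
  rw [pd_mul (hF i x) (hG x j)]

lemma pdM_transpose {k : Fin n} {F : (Fin n → ℝ) → Matrix (Fin n) (Fin n) ℝ} {u : Fin n → ℝ} :
    pdM k (fun v => (F v)ᵀ) u = (pdM k F u)ᵀ := rfl

lemma pdM_const {k : Fin n} (A : Matrix (Fin n) (Fin n) ℝ) (u : Fin n → ℝ) :
    pdM k (fun _ => A) u = 0 := by
  ext i j
  simp [pdM, pd]

lemma pdM_smul {k : Fin n} {F : (Fin n → ℝ) → Matrix (Fin n) (Fin n) ℝ} {u : Fin n → ℝ} (c : ℝ)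
    (hF : DAt F u) :
    pdM k (fun v => c • F v) u = c • pdM k F u := by
  ext i j
  simp only [pdM, Matrix.of_apply, Matrix.smul_apply, smul_eq_mul]
  unfold pd
  rw [fderiv_const_mul (hF i j)]
  simp

lemma pdM_sub {k : Fin n} {F G : (Fin n → ℝ) → Matrix (Fin n) (Fin n) ℝ} {u : Fin n → ℝ}
    (hF : DAt F u) (hG : DAt G u) :
    pdM k (fun v => F v - G v) u = pdM k F u - pdM k G u := by
  ext i j
  simp only [pdM, Matrix.of_apply, Matrix.sub_apply]
  unfold pd
  rw [fderiv_fun_sub (hF i j) (hG i j)]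
  simp

lemma pdM_finsum {k : Fin n} {β : Type*} {s : Finset β}
    {F : β → (Fin n → ℝ) → Matrix (Fin n) (Fin n) ℝ} {u : Fin n → ℝ}
    (hF : ∀ x ∈ s, DAt (F x) u) :
    pdM k (fun v => ∑ x ∈ s, F x v) u = ∑ x ∈ s, pdM k (F x) u := by
  ext i j
  simp only [pdM, Matrix.of_apply, Matrix.sum_apply]
  unfold pd
  rw [fderiv_fun_sum (fun x hx => hF x hx i j)]
  simp

lemma pdM_mul_const {k : Fin n} {F : (Fin n → ℝ) → Matrix (Fin n) (Fin n) ℝ} {u : Fin n → ℝ}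
    (r : Matrix (Fin n) (Fin n) ℝ) (hF : DAt F u) :
    pdM k (fun v => F v * r) u = pdM k F u * r := by
  rw [pdM_mul hF (DAt.const r u), pdM_const]
  simp

lemma pdM_quad {k : Fin n} {F1 F2 F3 : (Fin n → ℝ) → Matrix (Fin n) (Fin n) ℝ} {u : Fin n → ℝ}
    (r : Matrix (Fin n) (Fin n) ℝ) (h1 : DAt F1 u) (h2 : DAt F2 u) (h3 : DAt F3 u) :
    pdM k (fun v => F1 v * r * (F2 v)ᵀ * F3 v) u
      = pdM k F1 u * r * (F2 u)ᵀ * F3 u + F1 u * r * (pdM k F2 u)ᵀ * F3 u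
        + F1 u * r * (F2 u)ᵀ * pdM k F3 u := by
  have h12 : DAt (fun v => F1 v * r) u := h1.mul (DAt.const r u)
  have h123 : DAt (fun v => F1 v * r * (F2 v)ᵀ) u := h12.mul h2.transpose
  rw [pdM_mul h123 h3, pdM_mul h12 h2.transpose, pdM_mul_const r h1, pdM_transpose]
  noncomm_ring

lemma negpow (m : ℕ) (h : 1 ≤ m) : ((-1:ℝ))^m = -(-1:ℝ)^(m-1) := by
  obtain ⟨k, rfl⟩ : ∃ k, m = k+1 := ⟨m-1, by omega⟩
  simp [pow_succ]

lemma sum_swap_tri {M : Type*} [AddCommMonoid M] (N : ℕ) (f : ℕ → ℕ → M) :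
    ∑ p ∈ Finset.range N, ∑ a ∈ Finset.range (N - p), f p a
      = ∑ a ∈ Finset.range N, ∑ p ∈ Finset.range (N - a), f p a := by
  have key : ∀ (g : ℕ → ℕ → M),
      ∑ p ∈ Finset.range N, ∑ a ∈ Finset.range (N - p), g p a
        = ∑ p ∈ Finset.range N, ∑ a ∈ Finset.range N, if a + p < N then g p a else 0 := by
    intro g
    refine Finset.sum_congr rfl fun p hp => ?_
    rw [← Finset.sum_subset (Finset.range_subset_range.2 (Nat.sub_le N p))
      (fun a _ ha => by rw [if_neg]; simp only [Finset.mem_range] at ha; omega)]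
    refine Finset.sum_congr rfl fun a ha => ?_
    rw [if_pos]; simp only [Finset.mem_range] at ha; omega
  rw [key, Finset.sum_comm, key fun p a => f a p]
  refine Finset.sum_congr rfl fun a _ => Finset.sum_congr rfl fun p _ => ?_
  rw [Nat.add_comm a p]

variable {n : ℕ}

lemma key_identity {ℓ : ℕ} (hl : 1 ≤ ℓ)
    (P Q : ℕ → Matrix (Fin n) (Fin n) ℝ) (E r : Matrix (Fin n) (Fin n) ℝ)
    (horth : ∀ m ≤ ℓ, ∑ a ∈ Finset.range (m+1), ((-1:ℝ)^a) • (Q a * P (m-a))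
      = if m = 0 then (1 : Matrix (Fin n) (Fin n) ℝ) else 0) :
    E * P (ℓ-1) * r
      - ∑ p ∈ Finset.Icc 1 ℓ, ∑ q ∈ Finset.range (ℓ - p + 1), ((-1:ℝ)^(ℓ-p-q)) •
          ( E * (if q = 0 then 0 else P (q-1)) * r * Q (ℓ-p-q) * P p
          + P q * r * (if ℓ-p-q = 0 then 0 else Q (ℓ-p-q-1)) * E * P p
          + P q * r * Q (ℓ-p-q) * E * (if p = 0 then 0 else P (p-1)) )
      = ((∑ a ∈ Finset.range ℓ, ((-1:ℝ)^(ℓ-a)) • (P a * r * Q (ℓ-1-a))) * E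
        - E * (∑ a ∈ Finset.range ℓ, ((-1:ℝ)^(ℓ-a)) • (P a * r * Q (ℓ-1-a)))) * P 0 := by
  set X : Matrix (Fin n) (Fin n) ℝ :=
    ∑ a ∈ Finset.range ℓ, ((-1:ℝ)^(ℓ-a)) • (P a * r * Q (ℓ-1-a)) with hX
  -- the three partial sums
  set SA : Matrix (Fin n) (Fin n) ℝ :=
    ∑ p ∈ Finset.Icc 1 ℓ, ∑ q ∈ Finset.range (ℓ - p + 1), ((-1:ℝ)^(ℓ-p-q)) •
      (E * (if q = 0 then 0 else P (q-1)) * r * Q (ℓ-p-q) * P p) with hSA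
  set SB : Matrix (Fin n) (Fin n) ℝ :=
    ∑ p ∈ Finset.Icc 1 ℓ, ∑ q ∈ Finset.range (ℓ - p + 1), ((-1:ℝ)^(ℓ-p-q)) •
      (P q * r * (if ℓ-p-q = 0 then 0 else Q (ℓ-p-q-1)) * E * P p) with hSB
  set SC : Matrix (Fin n) (Fin n) ℝ :=
    ∑ p ∈ Finset.Icc 1 ℓ, ∑ q ∈ Finset.range (ℓ - p + 1), ((-1:ℝ)^(ℓ-p-q)) •
      (P q * r * Q (ℓ-p-q) * E * (if p = 0 then 0 else P (p-1))) with hSC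
  have hsplit : ∑ p ∈ Finset.Icc 1 ℓ, ∑ q ∈ Finset.range (ℓ - p + 1), ((-1:ℝ)^(ℓ-p-q)) •
          ( E * (if q = 0 then 0 else P (q-1)) * r * Q (ℓ-p-q) * P p
          + P q * r * (if ℓ-p-q = 0 then 0 else Q (ℓ-p-q-1)) * E * P p
          + P q * r * Q (ℓ-p-q) * E * (if p = 0 then 0 else P (p-1)) )
      = SA + SB + SC := by
    rw [hSA, hSB, hSC, ← Finset.sum_add_distrib, ← Finset.sum_add_distrib]
    refine Finset.sum_congr rfl fun p _ => ?_
    rw [← Finset.sum_add_distrib, ← Finset.sum_add_distrib]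
    refine Finset.sum_congr rfl fun q _ => ?_
    rw [smul_add, smul_add]
  -- `Ginner p` : reindexed first sum
  set Ginner : ℕ → Matrix (Fin n) (Fin n) ℝ :=
    fun p => ∑ a ∈ Finset.range (ℓ - p), ((-1:ℝ)^(ℓ-1-p-a)) •
      (E * P a * r * Q (ℓ-1-p-a) * P p) with hG
  -- the inner sum of SA equals Ginner p
  have hSAinner : ∀ p, 1 ≤ p →
      (∑ q ∈ Finset.range (ℓ - p + 1), ((-1:ℝ)^(ℓ-p-q)) •
        (E * (if q = 0 then 0 else P (q-1)) * r * Q (ℓ-p-q) * P p)) = Ginner p := by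
    intro p _
    rw [Finset.sum_range_succ' (fun q => ((-1:ℝ)^(ℓ-p-q)) •
      (E * (if q = 0 then 0 else P (q-1)) * r * Q (ℓ-p-q) * P p)) (ℓ - p)]
    simp only [if_pos rfl, ite_true, eq_self_iff_true, Matrix.mul_zero, Matrix.zero_mul,
      smul_zero, add_zero, hG]
    refine Finset.sum_congr rfl fun a ha => ?_
    simp only [Finset.mem_range] at ha
    rw [if_neg (by omega : ¬ a + 1 = 0)]
    have e1 : ℓ - p - (a+1) = ℓ - 1 - p - a := by omega
    have e2 : a + 1 - 1 = a := by omega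
    rw [e1, e2]
  have hSA' : SA = ∑ p ∈ Finset.Icc 1 ℓ, Ginner p := by
    rw [hSA]
    exact Finset.sum_congr rfl fun p hp => hSAinner p (Finset.mem_Icc.1 hp).1
  -- range (ℓ+1) = insert 0 (Icc 1 ℓ)
  have hins : Finset.range (ℓ+1) = insert 0 (Finset.Icc 1 ℓ) := by
    ext x; simp only [Finset.mem_range, Finset.mem_insert, Finset.mem_Icc]; omega
  -- sum of Ginner over range ℓ equals E * P (ℓ-1) * r   (orthogonality)
  have hGsum : ∑ p ∈ Finset.range ℓ, Ginner p = E * P (ℓ-1) * r := by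
    simp only [hG]
    rw [sum_swap_tri ℓ (fun p a => ((-1:ℝ)^(ℓ-1-p-a)) • (E * P a * r * Q (ℓ-1-p-a) * P p))]
    have step : ∀ a ∈ Finset.range ℓ,
        (∑ p ∈ Finset.range (ℓ - a), ((-1:ℝ)^(ℓ-1-p-a)) • (E * P a * r * Q (ℓ-1-p-a) * P p))
          = (E * P a * r) * (if ℓ - 1 - a = 0 then (1:Matrix (Fin n) (Fin n) ℝ) else 0) := by
      intro a ha
      simp only [Finset.mem_range] at ha
      have hm : ℓ - a = (ℓ - 1 - a) + 1 := by omega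
      rw [← horth (ℓ-1-a) (by omega)]
      rw [Finset.mul_sum]
      rw [hm]
      rw [← Finset.sum_range_reflect
        (fun c => (E * P a * r) * (((-1:ℝ)^c) • (Q c * P (ℓ-1-a-c)))) ((ℓ-1-a)+1)]
      refine Finset.sum_congr rfl fun p hp => ?_
      simp only [Finset.mem_range] at hp
      have e1 : (ℓ - 1 - a) + 1 - 1 - p = ℓ - 1 - a - p := by omega
      have e2 : ℓ - 1 - a - (ℓ - 1 - a - p) = p := by omega
      have e3 : ℓ - 1 - p - a = ℓ - 1 - a - p := by omega
      rw [e1, e2, e3, mul_smul_comm]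
      rw [mul_assoc (E * P a * r) (Q (ℓ-1-a-p)) (P p)]
    rw [Finset.sum_congr rfl step]
    rw [Finset.sum_eq_single (ℓ-1)]
    · rw [if_pos (by omega), mul_one]
    · intro a ha hne
      simp only [Finset.mem_range] at ha
      rw [if_neg (by omega), mul_zero]
    · intro h
      exact absurd (Finset.mem_range.2 (by omega)) h
  have hGl : Ginner ℓ = 0 := by
    simp only [hG]; simp [Nat.sub_self]
  -- Ginner 0 = -(E * X * P 0)
  have hG0 : Ginner 0 = -(E * X * P 0) := by
    simp only [hG, hX]
    rw [Finset.mul_sum, Finset.sum_mul, ← Finset.sum_neg_distrib]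
    refine Finset.sum_congr rfl fun a ha => ?_
    simp only [Finset.mem_range] at ha
    rw [mul_smul_comm, smul_mul_assoc, negpow (ℓ-a) (by omega), neg_smul, neg_neg]
    have e1 : ℓ - 1 - 0 - a = ℓ - a - 1 := by omega
    have e2 : ℓ - 1 - a = ℓ - a - 1 := by omega
    rw [e1, e2]
    congr 1
    noncomm_ring
  have hA : E * P (ℓ-1) * r - SA = -(E * X * P 0) := by
    have h1 : ∑ p ∈ Finset.range (ℓ+1), Ginner p = Ginner 0 + ∑ p ∈ Finset.Icc 1 ℓ, Ginner p := by
      rw [hins, Finset.sum_insert (by simp)]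
    have h2 : ∑ p ∈ Finset.range (ℓ+1), Ginner p = E * P (ℓ-1) * r := by
      rw [Finset.sum_range_succ, hGsum, hGl, add_zero]
    rw [hSA']
    have := h1.symm.trans h2
    rw [hG0] at this
    -- this : -(E*X*P 0) + ∑ = E * P (ℓ-1) * r
    linear_combination (norm := abel) -this
  -- auxiliary splitting lemmas for sums over `range ℓ`
  have haux1 : ∀ (g : ℕ → Matrix (Fin n) (Fin n) ℝ),
      ∑ i ∈ Finset.range ℓ, g i = g 0 + ∑ i ∈ Finset.range (ℓ-1), g (i+1) := by
    intro g
    obtain ⟨m, hm⟩ : ∃ m, ℓ = m + 1 := ⟨ℓ-1, by omega⟩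
    rw [hm, Nat.add_sub_cancel, Finset.sum_range_succ' g m, add_comm]
  have haux2 : ∀ (g : ℕ → Matrix (Fin n) (Fin n) ℝ),
      ∑ i ∈ Finset.range ℓ, g i = (∑ i ∈ Finset.range (ℓ-1), g i) + g (ℓ-1) := by
    intro g
    obtain ⟨m, hm⟩ : ∃ m, ℓ = m + 1 := ⟨ℓ-1, by omega⟩
    rw [hm, Nat.add_sub_cancel, Finset.sum_range_succ g m]
  -- reindexed B and C sums
  set βf : ℕ → Matrix (Fin n) (Fin n) ℝ :=
    fun i => ∑ q ∈ Finset.range (ℓ-1-i), ((-1:ℝ)^(ℓ-1-i-q)) •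
      (P q * r * Q (ℓ-2-i-q) * E * P (i+1)) with hβ
  set γf : ℕ → Matrix (Fin n) (Fin n) ℝ :=
    fun i => ∑ q ∈ Finset.range (ℓ-i), ((-1:ℝ)^(ℓ-1-i-q)) •
      (P q * r * Q (ℓ-1-i-q) * E * P i) with hγf
  have hSB' : SB = ∑ i ∈ Finset.range ℓ, βf i := by
    rw [hSB, ← Finset.Ico_add_one_right_eq_Icc, Finset.sum_Ico_eq_sum_range]
    simp only [Nat.add_sub_cancel, hβ]
    refine Finset.sum_congr rfl fun i _ => ?_
    -- drop the vanishing last term (q = ℓ-(1+i))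
    have hsplit2 : ℓ - (1+i) + 1 = (ℓ - 1 - i) + 1 := by omega
    rw [hsplit2, Finset.sum_range_succ]
    have hzero : ((-1:ℝ)^(ℓ-(1+i)-(ℓ-1-i))) • (P (ℓ-1-i) * r *
        (if ℓ-(1+i)-(ℓ-1-i) = 0 then 0 else Q (ℓ-(1+i)-(ℓ-1-i)-1)) * E * P (1+i)) = 0 := by
      rw [if_pos (by omega)]
      simp
    rw [hzero, add_zero]
    refine Finset.sum_congr rfl fun q hq => ?_
    simp only [Finset.mem_range] at hq
    rw [if_neg (by omega : ¬ ℓ - (1+i) - q = 0)]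
    rw [show ℓ - (1+i) - q = ℓ-1-i-q from by omega,
      show ℓ - 1 - i - q - 1 = ℓ-2-i-q from by omega,
      show 1 + i = i + 1 from by omega]
  have hSC' : SC = ∑ i ∈ Finset.range ℓ, γf i := by
    rw [hSC, ← Finset.Ico_add_one_right_eq_Icc, Finset.sum_Ico_eq_sum_range]
    simp only [Nat.add_sub_cancel, hγf]
    refine Finset.sum_congr rfl fun i hi => ?_
    simp only [Finset.mem_range] at hi
    rw [show ℓ - (1+i) + 1 = ℓ - i from by omega]
    refine Finset.sum_congr rfl fun q hq => ?_
    rw [if_neg (by omega : ¬ 1 + i = 0)]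
    rw [show ℓ - (1+i) - q = ℓ-1-i-q from by omega, show 1 + i - 1 = i from by omega]
  have hβγ : ∀ i, βf i = -(γf (i+1)) := by
    intro i
    simp only [hβ, hγf]
    rw [← Finset.sum_neg_distrib]
    refine Finset.sum_congr (by rw [show ℓ - (i+1) = ℓ-1-i from by omega]) fun q hq => ?_
    simp only [Finset.mem_range] at hq
    rw [show ℓ - 1 - (i+1) - q = ℓ-2-i-q from by omega]
    rw [negpow (ℓ-1-i-q) (by omega), show ℓ-1-i-q-1 = ℓ-2-i-q from by omega, neg_smul]
  have hβlast : βf (ℓ-1) = 0 := by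
    simp only [hβ]
    rw [show ℓ - 1 - (ℓ-1) = 0 from by omega]
    simp
  have hγ0 : γf 0 = -(X * E * P 0) := by
    simp only [hγf, hX]
    rw [Finset.sum_mul, Finset.sum_mul, ← Finset.sum_neg_distrib]
    refine Finset.sum_congr (by rw [Nat.sub_zero]) fun q hq => ?_
    simp only [Finset.mem_range] at hq
    rw [smul_mul_assoc, smul_mul_assoc, negpow (ℓ-q) (by omega), neg_smul, neg_neg]
    rw [show ℓ - 1 - 0 - q = ℓ - q - 1 from by omega, show ℓ - 1 - q = ℓ - q - 1 from by omega]
  have hBC : SB + SC = -(X * E * P 0) := by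
    rw [hSB', hSC', haux2 βf, haux1 γf, hβlast, hγ0]
    have hcancel : ∑ i ∈ Finset.range (ℓ-1), βf i
        = -∑ i ∈ Finset.range (ℓ-1), γf (i+1) := by
      rw [← Finset.sum_neg_distrib]
      exact Finset.sum_congr rfl fun i _ => hβγ i
    rw [hcancel]
    abel
  rw [hsplit]
  have hfin : E * P (ℓ-1) * r - (SA + SB + SC)
      = (E * P (ℓ-1) * r - SA) - (SB + SC) := by abel
  rw [hfin, hA, hBC]
  noncomm_ring


lemma mul_E_apply (k : Fin n) (M : Matrix (Fin n) (Fin n) ℝ) (i j : Fin n) :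
    (M * Matrix.single k k (1:ℝ)) i j = if j = k then M i k else 0 := by
  by_cases h : j = k
  · subst h; simp
  · simp [Matrix.mul_single_apply_of_ne (c := (1:ℝ)) k k i j h M, h]

lemma E_mul_apply (k : Fin n) (M : Matrix (Fin n) (Fin n) ℝ) (i j : Fin n) :
    (Matrix.single k k (1:ℝ) * M) i j = if i = k then M k j else 0 := by
  by_cases h : i = k
  · subst h; simp
  · simp [Matrix.single_mul_apply_of_ne (c := (1:ℝ)) k k i j h M, h]

lemma Gsym (k : Fin n) (A : Matrix (Fin n) (Fin n) ℝ)
    (hsym : ∀ i j : Fin n, i ≠ j → A i j = A j i) :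
    (A * Matrix.single k k (1:ℝ) - Matrix.single k k (1:ℝ) * A)ᵀ
      = -(A * Matrix.single k k (1:ℝ) - Matrix.single k k (1:ℝ) * A) := by
  ext i j
  simp only [Matrix.transpose_apply, Matrix.sub_apply, Matrix.neg_apply,
    mul_E_apply, E_mul_apply]
  by_cases hik : i = k <;> by_cases hjk : j = k
  · simp [hik, hjk]
  · simp only [if_pos hik, if_neg hjk]
    rw [hsym j k hjk]
    ring
  · simp only [if_neg hik, if_pos hjk]
    rw [hsym i k hik]
    ring
  · simp [hik, hjk]


end PdAux

namespace PdAux2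
open PdAux
variable {n : ℕ}
lemma Esym (k : Fin n) : (Matrix.single k k (1:ℝ))ᵀ = Matrix.single k k 1 := by
  ext i j
  simp only [Matrix.transpose_apply, Matrix.single, Matrix.of_apply]
  by_cases h1 : k = i <;> by_cases h2 : k = j <;> simp [h1, h2]
lemma ite_transpose (c : Prop) [Decidable c] (M : Matrix (Fin n) (Fin n) ℝ) :
    (if c then (0 : Matrix (Fin n) (Fin n) ℝ) else M)ᵀ = if c then 0 else Mᵀ := by
  split <;> simp
lemma algebra_step {ℓ : ℕ} (hl : 1 ≤ ℓ)
    (P Q : ℕ → Matrix (Fin n) (Fin n) ℝ) (E G r δΨ D : Matrix (Fin n) (Fin n) ℝ)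
    (hQ : ∀ d, Q d = (P d)ᵀ)
    (hGT : Gᵀ = -G) (hET : Eᵀ = E)
    (horth : ∀ m ≤ ℓ, ∑ a ∈ Finset.range (m+1), ((-1:ℝ)^a) • (Q a * P (m-a))
      = if m = 0 then (1 : Matrix (Fin n) (Fin n) ℝ) else 0)
    (hδΨ : δΨ = P ℓ * r - ∑ p ∈ Finset.Icc 1 ℓ, ∑ q ∈ Finset.range (ℓ-p+1),
      ((-1:ℝ)^(ℓ-p-q)) • (P q * r * Q (ℓ-p-q) * P p))
    (hcomp : D * P 0 + G * δΨ
      = (E * (if ℓ = 0 then 0 else P (ℓ-1)) + G * P ℓ) * r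
        - ∑ p ∈ Finset.Icc 1 ℓ, ∑ q ∈ Finset.range (ℓ-p+1), ((-1:ℝ)^(ℓ-p-q)) •
            ( (E * (if q = 0 then 0 else P (q-1)) + G * P q) * r * Q (ℓ-p-q) * P p
            + P q * r * (E * (if ℓ-p-q = 0 then 0 else P (ℓ-p-q-1)) + G * P (ℓ-p-q))ᵀ * P p
            + P q * r * Q (ℓ-p-q) * (E * (if p = 0 then 0 else P (p-1)) + G * P p) )) :
    D * P 0 = ((∑ a ∈ Finset.range ℓ, ((-1:ℝ)^(ℓ-a)) • (P a * r * Q (ℓ-1-a))) * E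
        - E * (∑ a ∈ Finset.range ℓ, ((-1:ℝ)^(ℓ-a)) • (P a * r * Q (ℓ-1-a)))) * P 0 := by
  rw [← key_identity hl P Q E r horth]
  have hGδΨ : G * δΨ = G * (P ℓ * r)
      - ∑ p ∈ Finset.Icc 1 ℓ, ∑ q ∈ Finset.range (ℓ-p+1), ((-1:ℝ)^(ℓ-p-q)) •
          (G * (P q * r * Q (ℓ-p-q) * P p)) := by
    rw [hδΨ, mul_sub, Finset.mul_sum]
    congr 1
    refine Finset.sum_congr rfl fun p _ => ?_
    rw [Finset.mul_sum]
    exact Finset.sum_congr rfl fun q _ => (mul_smul_comm _ _ _)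
  have hD : D * P 0
      = ((E * (if ℓ = 0 then 0 else P (ℓ-1)) + G * P ℓ) * r
          - ∑ p ∈ Finset.Icc 1 ℓ, ∑ q ∈ Finset.range (ℓ-p+1), ((-1:ℝ)^(ℓ-p-q)) •
              ( (E * (if q = 0 then 0 else P (q-1)) + G * P q) * r * Q (ℓ-p-q) * P p
              + P q * r * (E * (if ℓ-p-q = 0 then 0 else P (ℓ-p-q-1)) + G * P (ℓ-p-q))ᵀ * P p
              + P q * r * Q (ℓ-p-q) * (E * (if p = 0 then 0 else P (p-1)) + G * P p) ))
        - (G * (P ℓ * r)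
          - ∑ p ∈ Finset.Icc 1 ℓ, ∑ q ∈ Finset.range (ℓ-p+1), ((-1:ℝ)^(ℓ-p-q)) •
              (G * (P q * r * Q (ℓ-p-q) * P p))) := by
    rw [← hGδΨ]
    exact eq_sub_of_add_eq hcomp
  rw [hD, if_neg (by omega : ¬ ℓ = 0)]
  have hterm : (∑ p ∈ Finset.Icc 1 ℓ, ∑ q ∈ Finset.range (ℓ-p+1), ((-1:ℝ)^(ℓ-p-q)) •
              ( (E * (if q = 0 then 0 else P (q-1)) + G * P q) * r * Q (ℓ-p-q) * P p
              + P q * r * (E * (if ℓ-p-q = 0 then 0 else P (ℓ-p-q-1)) + G * P (ℓ-p-q))ᵀ * P p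
              + P q * r * Q (ℓ-p-q) * (E * (if p = 0 then 0 else P (p-1)) + G * P p) ))
          - (∑ p ∈ Finset.Icc 1 ℓ, ∑ q ∈ Finset.range (ℓ-p+1), ((-1:ℝ)^(ℓ-p-q)) •
              (G * (P q * r * Q (ℓ-p-q) * P p)))
      = ∑ p ∈ Finset.Icc 1 ℓ, ∑ q ∈ Finset.range (ℓ-p+1), ((-1:ℝ)^(ℓ-p-q)) •
          ( E * (if q = 0 then 0 else P (q-1)) * r * Q (ℓ-p-q) * P p
          + P q * r * (if ℓ-p-q = 0 then 0 else Q (ℓ-p-q-1)) * E * P p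
          + P q * r * Q (ℓ-p-q) * E * (if p = 0 then 0 else P (p-1)) ) := by
    rw [← Finset.sum_sub_distrib]
    refine Finset.sum_congr rfl fun p _ => ?_
    rw [← Finset.sum_sub_distrib]
    refine Finset.sum_congr rfl fun q _ => ?_
    rw [← smul_sub]
    congr 1
    have htr : (E * (if ℓ-p-q = 0 then 0 else P (ℓ-p-q-1)) + G * P (ℓ-p-q))ᵀ
        = (if ℓ-p-q = 0 then 0 else Q (ℓ-p-q-1)) * E - Q (ℓ-p-q) * G := by
      rw [Matrix.transpose_add, Matrix.transpose_mul, Matrix.transpose_mul,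
        ite_transpose, hET, hGT, ← hQ, ← hQ]
      noncomm_ring
    rw [htr]
    noncomm_ring
  calc ((E * P (ℓ-1) + G * P ℓ) * r
          - ∑ p ∈ Finset.Icc 1 ℓ, ∑ q ∈ Finset.range (ℓ-p+1), ((-1:ℝ)^(ℓ-p-q)) •
              ( (E * (if q = 0 then 0 else P (q-1)) + G * P q) * r * Q (ℓ-p-q) * P p
              + P q * r * (E * (if ℓ-p-q = 0 then 0 else P (ℓ-p-q-1)) + G * P (ℓ-p-q))ᵀ * P p
              + P q * r * Q (ℓ-p-q) * (E * (if p = 0 then 0 else P (p-1)) + G * P p) ))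
        - (G * (P ℓ * r)
          - ∑ p ∈ Finset.Icc 1 ℓ, ∑ q ∈ Finset.range (ℓ-p+1), ((-1:ℝ)^(ℓ-p-q)) •
              (G * (P q * r * Q (ℓ-p-q) * P p)))
      = E * P (ℓ-1) * r
        - ((∑ p ∈ Finset.Icc 1 ℓ, ∑ q ∈ Finset.range (ℓ-p+1), ((-1:ℝ)^(ℓ-p-q)) •
              ( (E * (if q = 0 then 0 else P (q-1)) + G * P q) * r * Q (ℓ-p-q) * P p
              + P q * r * (E * (if ℓ-p-q = 0 then 0 else P (ℓ-p-q-1)) + G * P (ℓ-p-q))ᵀ * P p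
              + P q * r * Q (ℓ-p-q) * (E * (if p = 0 then 0 else P (p-1)) + G * P p) ))
          - (∑ p ∈ Finset.Icc 1 ℓ, ∑ q ∈ Finset.range (ℓ-p+1), ((-1:ℝ)^(ℓ-p-q)) •
              (G * (P q * r * Q (ℓ-p-q) * P p)))) := by noncomm_ring
    _ = E * P (ℓ-1) * r
        - ∑ p ∈ Finset.Icc 1 ℓ, ∑ q ∈ Finset.range (ℓ-p+1), ((-1:ℝ)^(ℓ-p-q)) •
          ( E * (if q = 0 then 0 else P (q-1)) * r * Q (ℓ-p-q) * P p
          + P q * r * (if ℓ-p-q = 0 then 0 else Q (ℓ-p-q-1)) * E * P p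
          + P q * r * Q (ℓ-p-q) * E * (if p = 0 then 0 else P (p-1)) ) := by rw [hterm]
end PdAux2

open PdAux PdAux2

/-- The infinitesimal Givental–van de Leur action of `r·z^{-ℓ}` on the off-diagonal part of a
solution `γ` of the Darboux–Egoroff equations:
`δγ = ∑_{a+b=ℓ-1} (−1)^{b−1} Ψ_a r Ψ_bᵀ` off the diagonal. -/
theorem infinitesimal_deformation_gamma
    {n ℓ : ℕ} (hn : 1 ≤ n) (hl : 1 ≤ ℓ)
    (U : Set (Fin n → ℝ)) (hU : IsOpen U)
    (γ : (Fin n → ℝ) → Matrix (Fin n) (Fin n) ℝ)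
    (hγsmooth : ∀ i j, ContDiffOn ℝ (⊤ : ℕ∞) (fun u => γ u i j) U)
    (hγsym : ∀ u ∈ U, ∀ i j : Fin n, i ≠ j → γ u i j = γ u j i)
    (Ψ : ℕ → (Fin n → ℝ) → Matrix (Fin n) (Fin n) ℝ)
    (hΨsmooth : ∀ d ≤ ℓ, ∀ i j, ContDiffOn ℝ (⊤ : ℕ∞) (fun u => Ψ d u i j) U)
    (hΨ0inv : ∀ u ∈ U, IsUnit (Ψ 0 u))
    (hΨeq : ∀ d ≤ ℓ, ∀ u ∈ U, ∀ k i j : Fin n,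
      pd k (fun v => Ψ d v i j) u
        = ((Matrix.single k k 1 : Matrix (Fin n) (Fin n) ℝ)
              * (if d = 0 then 0 else Ψ (d - 1) u)
            + (γ u * (Matrix.single k k 1 : Matrix (Fin n) (Fin n) ℝ)
                - (Matrix.single k k 1 : Matrix (Fin n) (Fin n) ℝ) * γ u) * Ψ d u) i j)
    (horth : ∀ m ≤ ℓ, ∀ u ∈ U,
      ∑ a ∈ Finset.range (m + 1), ((-1 : ℝ) ^ a) • ((Ψ a u)ᵀ * Ψ (m - a) u)
        = if m = 0 then 1 else 0)
    (horth' : ∀ m ≤ ℓ, ∀ u ∈ U,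
      ∑ a ∈ Finset.range (m + 1), ((-1 : ℝ) ^ a) • (Ψ a u * (Ψ (m - a) u)ᵀ)
        = if m = 0 then 1 else 0)
    (r : Matrix (Fin n) (Fin n) ℝ) (hr : rᵀ = ((-1 : ℝ) ^ (ℓ + 1)) • r)
    (δΨ₀ δγ : (Fin n → ℝ) → Matrix (Fin n) (Fin n) ℝ)
    (hδΨ₀smooth : ∀ i j, ContDiffOn ℝ (⊤ : ℕ∞) (fun u => δΨ₀ u i j) U)
    (hδγsmooth : ∀ i j, ContDiffOn ℝ (⊤ : ℕ∞) (fun u => δγ u i j) U)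
    (hδΨ₀ : ∀ u ∈ U, δΨ₀ u
      = Ψ ℓ u * r
        - ∑ p ∈ Finset.Icc 1 ℓ, ∑ q ∈ Finset.range (ℓ - p + 1),
            ((-1 : ℝ) ^ (ℓ - p - q)) • (Ψ q u * r * (Ψ (ℓ - p - q) u)ᵀ * Ψ p u))
    (hlin : ∀ u ∈ U, ∀ k i j : Fin n,
      pd k (fun v => δΨ₀ v i j) u
        = ((δγ u * (Matrix.single k k 1 : Matrix (Fin n) (Fin n) ℝ)
              - (Matrix.single k k 1 : Matrix (Fin n) (Fin n) ℝ) * δγ u) * Ψ 0 u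
            + (γ u * (Matrix.single k k 1 : Matrix (Fin n) (Fin n) ℝ)
                - (Matrix.single k k 1 : Matrix (Fin n) (Fin n) ℝ) * γ u) * δΨ₀ u) i j) :
    ∀ u ∈ U, ∀ i j : Fin n, i ≠ j →
      δγ u i j
        = (∑ a ∈ Finset.range ℓ,
            ((-1 : ℝ) ^ ((ℓ - 1 - a) + 1)) • (Ψ a u * r * (Ψ (ℓ - 1 - a) u)ᵀ)) i j := by
  intro u hu i j hij
  have hmem : U ∈ nhds u := hU.mem_nhds hu
  have hDΨ : ∀ d, d ≤ ℓ → DAt (Ψ d) u := fun d hd i' j' =>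
    ((hΨsmooth d hd i' j').contDiffAt hmem).differentiableAt (by simp)
  -- the matrix-valued form of the Darboux–Egoroff linear system
  have hpdΨ : ∀ d, d ≤ ℓ → ∀ k : Fin n, pdM k (Ψ d) u
      = (Matrix.single k k 1 : Matrix (Fin n) (Fin n) ℝ) * (if d = 0 then 0 else Ψ (d-1) u)
        + (γ u * Matrix.single k k 1 - Matrix.single k k 1 * γ u) * Ψ d u := by
    intro d hd k
    ext i' j'
    exact hΨeq d hd u hu k i' j'
  have hpdδ : ∀ k : Fin n, pdM k δΨ₀ u
      = (δγ u * Matrix.single k k 1 - Matrix.single k k 1 * δγ u) * Ψ 0 u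
        + (γ u * Matrix.single k k 1 - Matrix.single k k 1 * γ u) * δΨ₀ u := by
    intro k
    ext i' j'
    exact hlin u hu k i' j'
  -- differentiability of the pieces
  have hDquad : ∀ p, p ≤ ℓ → ∀ q, q ≤ ℓ → ∀ b, b ≤ ℓ →
      DAt (fun v => Ψ q v * r * (Ψ b v)ᵀ * Ψ p v) u := fun p hp q hq b hb =>
    (((hDΨ q hq).mul (DAt.const r u)).mul (hDΨ b hb).transpose).mul (hDΨ p hp)
  have hDinner : ∀ p, p ∈ Finset.Icc 1 ℓ →
      DAt (fun v => ∑ q ∈ Finset.range (ℓ - p + 1),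
        ((-1 : ℝ) ^ (ℓ - p - q)) • (Ψ q v * r * (Ψ (ℓ - p - q) v)ᵀ * Ψ p v)) u := by
    intro p hp
    simp only [Finset.mem_Icc] at hp
    exact DAt.finsum fun q hq => by
      simp only [Finset.mem_range] at hq
      exact DAt.smul _ (hDquad p (by omega) q (by omega) (ℓ-p-q) (by omega))
  have hDsum : DAt (fun v => ∑ p ∈ Finset.Icc 1 ℓ, ∑ q ∈ Finset.range (ℓ - p + 1),
      ((-1 : ℝ) ^ (ℓ - p - q)) • (Ψ q v * r * (Ψ (ℓ - p - q) v)ᵀ * Ψ p v)) u :=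
    DAt.finsum hDinner
  -- compute the derivative of δΨ₀ from its explicit formula
  have hpdcomp : ∀ k : Fin n, pdM k δΨ₀ u
      = (Matrix.single k k 1 * (if ℓ = 0 then 0 else Ψ (ℓ-1) u)
          + (γ u * Matrix.single k k 1 - Matrix.single k k 1 * γ u) * Ψ ℓ u) * r
        - ∑ p ∈ Finset.Icc 1 ℓ, ∑ q ∈ Finset.range (ℓ - p + 1), ((-1 : ℝ) ^ (ℓ - p - q)) •
            ( (Matrix.single k k 1 * (if q = 0 then 0 else Ψ (q-1) u)
                + (γ u * Matrix.single k k 1 - Matrix.single k k 1 * γ u) * Ψ q u)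
                * r * (Ψ (ℓ-p-q) u)ᵀ * Ψ p u
            + Ψ q u * r * (Matrix.single k k 1 * (if ℓ-p-q = 0 then 0 else Ψ (ℓ-p-q-1) u)
                + (γ u * Matrix.single k k 1 - Matrix.single k k 1 * γ u) * Ψ (ℓ-p-q) u)ᵀ
                * Ψ p u
            + Ψ q u * r * (Ψ (ℓ-p-q) u)ᵀ
                * (Matrix.single k k 1 * (if p = 0 then 0 else Ψ (p-1) u)
                  + (γ u * Matrix.single k k 1 - Matrix.single k k 1 * γ u) * Ψ p u) ) := by
    intro k
    have h1 : pdM k δΨ₀ u = pdM k (fun v => Ψ ℓ v * r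
        - ∑ p ∈ Finset.Icc 1 ℓ, ∑ q ∈ Finset.range (ℓ - p + 1),
            ((-1 : ℝ) ^ (ℓ - p - q)) • (Ψ q v * r * (Ψ (ℓ - p - q) v)ᵀ * Ψ p v)) u := by
      ext i' j'
      refine pd_congr ?_
      filter_upwards [hmem] with v hv
      rw [hδΨ₀ v hv]
    rw [h1, pdM_sub ((hDΨ ℓ le_rfl).mul (DAt.const r u)) hDsum,
      pdM_mul_const r (hDΨ ℓ le_rfl), pdM_finsum hDinner, hpdΨ ℓ le_rfl k]
    congr 1
    refine Finset.sum_congr rfl fun p hp => ?_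
    simp only [Finset.mem_Icc] at hp
    rw [pdM_finsum fun q hq => by
      simp only [Finset.mem_range] at hq
      exact DAt.smul _ (hDquad p (by omega) q (by omega) (ℓ-p-q) (by omega))]
    refine Finset.sum_congr rfl fun q hq => ?_
    simp only [Finset.mem_range] at hq
    rw [pdM_smul _ (hDquad p (by omega) q (by omega) (ℓ-p-q) (by omega)),
      pdM_quad r (hDΨ q (by omega)) (hDΨ (ℓ-p-q) (by omega)) (hDΨ p (by omega)),
      hpdΨ q (by omega) k, hpdΨ (ℓ-p-q) (by omega) k, hpdΨ p (by omega) k]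
  -- the commutator identity for each k
  set X : Matrix (Fin n) (Fin n) ℝ :=
    ∑ a ∈ Finset.range ℓ, ((-1:ℝ)^(ℓ-a)) • (Ψ a u * r * (Ψ (ℓ-1-a) u)ᵀ) with hX
  have key : ∀ k : Fin n,
      (δγ u * Matrix.single k k 1 - Matrix.single k k 1 * δγ u) * Ψ 0 u
        = (X * Matrix.single k k 1 - Matrix.single k k 1 * X) * Ψ 0 u := by
    intro k
    exact algebra_step hl (fun d => Ψ d u) (fun d => (Ψ d u)ᵀ)
      (Matrix.single k k 1) (γ u * Matrix.single k k 1 - Matrix.single k k 1 * γ u)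
      r (δΨ₀ u) (δγ u * Matrix.single k k 1 - Matrix.single k k 1 * δγ u)
      (fun d => rfl) (Gsym k (γ u) (hγsym u hu)) (Esym k)
      (fun m hm => horth m hm u hu) (hδΨ₀ u hu)
      ((hpdδ k).symm.trans (hpdcomp k))
  -- cancel the invertible matrix Ψ 0 u
  obtain ⟨w, hw⟩ := hΨ0inv u hu
  have hinv : Ψ 0 u * (↑w⁻¹ : Matrix (Fin n) (Fin n) ℝ) = 1 := by
    rw [← hw]; exact w.mul_inv
  have hcomm : ∀ k : Fin n,
      δγ u * Matrix.single k k 1 - Matrix.single k k 1 * δγ u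
        = X * Matrix.single k k 1 - Matrix.single k k 1 * X := by
    intro k
    have h2 := congrArg (fun M => M * (↑w⁻¹ : Matrix (Fin n) (Fin n) ℝ)) (key k)
    simpa only [Matrix.mul_assoc, hinv, Matrix.mul_one] using h2
  -- read off the (i,j) entry at k = j
  have hentry := congrArg (fun M => M i j) (hcomm j)
  simp only [Matrix.sub_apply, mul_E_apply, E_mul_apply, if_pos rfl, if_neg hij] at hentry
  -- hentry : δγ u i j - 0 = X i j - 0
  have hXgoal : X = ∑ a ∈ Finset.range ℓ,
      ((-1 : ℝ) ^ ((ℓ - 1 - a) + 1)) • (Ψ a u * r * (Ψ (ℓ - 1 - a) u)ᵀ) := by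
    rw [hX]
    refine Finset.sum_congr rfl fun a ha => ?_
    simp only [Finset.mem_range] at ha
    rw [show (ℓ - 1 - a) + 1 = ℓ - a from by omega]
  rw [← hXgoal]
  simpa using hentry
end

section
/- Let n ≥ 1 and let U ⊆ ℝⁿ be open with coordinates u₁,…,uₙ. Let γ : U → Matrix (Fin n) (Fin n) ℝ be smooth with γᵢⱼ = γⱼᵢ for i ≠ j, and let Ψ₀, Ψ₁ : U → Matrix (Fin n) (Fin n) ℝ be smooth with Ψ₀(u) invertible for all u, satisfying: ∂Ψ₀/∂u_k = (γ·E_kk − E_kk·γ)·Ψ₀ and ∂Ψ₁/∂u_k = E_kk·Ψ₀ + (γ·E_kk − E_kk·γ)·Ψ₁ for all k; Ψ₀ᵀΨ₀ = Id = Ψ₀Ψ₀ᵀ; Ψ₀ᵀΨ₁ = Ψ₁ᵀΨ₀ and Ψ₀Ψ₁ᵀ = Ψ₁Ψ₀ᵀ. Let r be a constant symmetric n×n real matrix, and let δΨ₀, δγ : U → Matrix (Fin n) (Fin n) ℝ be smooth with δΨ₀ = Ψ₁·r − Ψ₀·r·Ψ₀ᵀ·Ψ₁ and ∂(δΨ₀)/∂u_k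 = (δγ·E_kk − E_kk·δγ)·Ψ₀ + (γ·E_kk − E_kk·γ)·δΨ₀ for all k. Then for all i ≠ j: (δγ)ᵢⱼ = −(Ψ₀·r·Ψ₀ᵀ)ᵢⱼ. -/
open Matrix

noncomputable def matPd {n : ℕ} (k : Fin n) (f : (Fin n → ℝ) → Matrix (Fin n) (Fin n) ℝ)
    (u : Fin n → ℝ) : Matrix (Fin n) (Fin n) ℝ :=
  Matrix.of fun i j => pd k (fun v => f v i j) u

section aux
variable {n : ℕ} {u : Fin n → ℝ} {f g : (Fin n → ℝ) → Matrix (Fin n) (Fin n) ℝ}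

lemma entryDiff_mul (hf : ∀ i j, DifferentiableAt ℝ (fun v => f v i j) u)
    (hg : ∀ i j, DifferentiableAt ℝ (fun v => g v i j) u) :
    ∀ i j, DifferentiableAt ℝ (fun v => (f v * g v) i j) u := by
  intro i j
  have h1 : (fun v => (f v * g v) i j) = fun v => ∑ l, f v i l * g v l j := by
    funext v; simp [Matrix.mul_apply]
  rw [h1]
  exact DifferentiableAt.fun_sum fun l _ => (hf i l).mul (hg l j)

lemma matPd_mul (hf : ∀ i j, DifferentiableAt ℝ (fun v => f v i j) u)
    (hg : ∀ i j, DifferentiableAt ℝ (fun v => g v i j) u) (k : Fin n) :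
    matPd k (fun v => f v * g v) u = matPd k f u * g u + f u * matPd k g u := by
  ext i j
  have h1 : (fun v => (f v * g v) i j) = fun v => ∑ l, f v i l * g v l j := by
    funext v; simp [Matrix.mul_apply]
  simp only [matPd, Matrix.of_apply, Matrix.add_apply, Matrix.mul_apply]
  unfold pd
  rw [fderiv_fun_sum (A := fun l v => f v i l * g v l j) (fun l _ => ((hf i l).mul (hg l j)))]
  rw [ContinuousLinearMap.sum_apply]
  have h2 : ∀ l : Fin n, (fderiv ℝ (fun v => f v i l * g v l j) u) (Pi.single k 1)
      = (fderiv ℝ (fun v => f v i l) u) (Pi.single k 1) * g u l j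
        + f u i l * (fderiv ℝ (fun v => g v l j) u) (Pi.single k 1) := by
    intro l
    rw [fderiv_fun_mul (hf i l) (hg l j)]
    simp only [ContinuousLinearMap.add_apply, ContinuousLinearMap.smul_apply, smul_eq_mul]
    ring
  simp only [h2, Finset.sum_add_distrib]

lemma matPd_sub (hf : ∀ i j, DifferentiableAt ℝ (fun v => f v i j) u)
    (hg : ∀ i j, DifferentiableAt ℝ (fun v => g v i j) u) (k : Fin n) :
    matPd k (fun v => f v - g v) u = matPd k f u - matPd k g u := by
  ext i j
  simp only [matPd, Matrix.of_apply, Matrix.sub_apply]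
  unfold pd
  have h1 : (fun v => (f v - g v) i j) = fun v => f v i j - g v i j := by
    funext v; simp [Matrix.sub_apply]
  rw [fderiv_fun_sub (hf i j) (hg i j)]; simp

lemma matPd_const (k : Fin n) (c : Matrix (Fin n) (Fin n) ℝ) :
    matPd k (fun _ => c) u = 0 := by
  ext i j
  simp [matPd, pd]

lemma matPd_transpose (k : Fin n) :
    matPd k (fun v => (f v)ᵀ) u = (matPd k f u)ᵀ := rfl

lemma matPd_congr {U : Set (Fin n → ℝ)} (hU : IsOpen U) (hu : u ∈ U)
    (h : ∀ v ∈ U, f v = g v) (k : Fin n) : matPd k f u = matPd k g u := by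
  ext i j
  simp only [matPd, Matrix.of_apply, pd]
  congr 1
  apply Filter.EventuallyEq.fderiv_eq
  exact Filter.eventuallyEq_of_mem (hU.mem_nhds hu) fun v hv => by rw [h v hv]

end aux

section main
variable {n : ℕ}

lemma Vt_neg {n : ℕ} (G : Matrix (Fin n) (Fin n) ℝ)
    (hsym : ∀ a b : Fin n, a ≠ b → G a b = G b a) (k : Fin n) :
    (G * Matrix.single k k (1:ℝ) - Matrix.single k k (1:ℝ) * G)ᵀ
      = -(G * Matrix.single k k (1:ℝ) - Matrix.single k k (1:ℝ) * G) := by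
  ext a b
  simp only [Matrix.transpose_apply, Matrix.sub_apply, Matrix.neg_apply]
  by_cases hak : a = k <;> by_cases hbk : b = k
  · subst hak; subst hbk; simp
  · subst hak
    simp only [Matrix.mul_single_apply_same,
      Matrix.single_mul_apply_same,
      Matrix.mul_single_apply_of_ne _ _ _ _ _ hbk,
      Matrix.single_mul_apply_of_ne _ _ _ _ _ hbk]
    rw [hsym b a hbk]; ring
  · subst hbk
    simp only [Matrix.mul_single_apply_same,
      Matrix.single_mul_apply_same,
      Matrix.mul_single_apply_of_ne _ _ _ _ _ hak,
      Matrix.single_mul_apply_of_ne _ _ _ _ _ hak]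
    rw [hsym a b hak]; ring
  · simp only [Matrix.mul_single_apply_of_ne _ _ _ _ _ hbk,
      Matrix.single_mul_apply_of_ne _ _ _ _ _ hbk,
      Matrix.mul_single_apply_of_ne _ _ _ _ _ hak,
      Matrix.single_mul_apply_of_ne _ _ _ _ _ hak]
    ring

end main

/-- The simplest nontrivial Givental–van de Leur deformation, by `r·z^{-1}` with `r` symmetric:
the off-diagonal part of the induced infinitesimal deformation of `γ` is `δγ = −Ψ₀ r Ψ₀ᵀ`. -/
theorem infinitesimal_deformation_gamma_ell_one
    {n : ℕ} (hn : 1 ≤ n)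
    (U : Set (Fin n → ℝ)) (hU : IsOpen U)
    (γ : (Fin n → ℝ) → Matrix (Fin n) (Fin n) ℝ)
    (hγsmooth : ∀ i j, ContDiffOn ℝ (⊤ : ℕ∞) (fun u => γ u i j) U)
    (hγsym : ∀ u ∈ U, ∀ i j : Fin n, i ≠ j → γ u i j = γ u j i)
    (Ψ₀ Ψ₁ : (Fin n → ℝ) → Matrix (Fin n) (Fin n) ℝ)
    (hΨ₀smooth : ∀ i j, ContDiffOn ℝ (⊤ : ℕ∞) (fun u => Ψ₀ u i j) U)
    (hΨ₁smooth : ∀ i j, ContDiffOn ℝ (⊤ : ℕ∞) (fun u => Ψ₁ u i j) U)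
    (hΨ₀inv : ∀ u ∈ U, IsUnit (Ψ₀ u))
    (hΨ₀eq : ∀ u ∈ U, ∀ k i j : Fin n,
      pd k (fun v => Ψ₀ v i j) u
        = ((γ u * (Matrix.single k k 1 : Matrix (Fin n) (Fin n) ℝ)
            - (Matrix.single k k 1 : Matrix (Fin n) (Fin n) ℝ) * γ u) * Ψ₀ u) i j)
    (hΨ₁eq : ∀ u ∈ U, ∀ k i j : Fin n,
      pd k (fun v => Ψ₁ v i j) u
        = ((Matrix.single k k 1 : Matrix (Fin n) (Fin n) ℝ) * Ψ₀ u
            + (γ u * (Matrix.single k k 1 : Matrix (Fin n) (Fin n) ℝ)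
                - (Matrix.single k k 1 : Matrix (Fin n) (Fin n) ℝ) * γ u) * Ψ₁ u) i j)
    (horth₀ : ∀ u ∈ U, (Ψ₀ u)ᵀ * Ψ₀ u = 1)
    (horth₀' : ∀ u ∈ U, Ψ₀ u * (Ψ₀ u)ᵀ = 1)
    (horth₁ : ∀ u ∈ U, (Ψ₀ u)ᵀ * Ψ₁ u = (Ψ₁ u)ᵀ * Ψ₀ u)
    (horth₁' : ∀ u ∈ U, Ψ₀ u * (Ψ₁ u)ᵀ = Ψ₁ u * (Ψ₀ u)ᵀ)
    (r : Matrix (Fin n) (Fin n) ℝ) (hr : rᵀ = r)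
    (δΨ₀ δγ : (Fin n → ℝ) → Matrix (Fin n) (Fin n) ℝ)
    (hδΨ₀smooth : ∀ i j, ContDiffOn ℝ (⊤ : ℕ∞) (fun u => δΨ₀ u i j) U)
    (hδγsmooth : ∀ i j, ContDiffOn ℝ (⊤ : ℕ∞) (fun u => δγ u i j) U)
    (hδΨ₀ : ∀ u ∈ U, δΨ₀ u = Ψ₁ u * r - Ψ₀ u * r * (Ψ₀ u)ᵀ * Ψ₁ u)
    (hlin : ∀ u ∈ U, ∀ k i j : Fin n,
      pd k (fun v => δΨ₀ v i j) u
        = ((δγ u * (Matrix.single k k 1 : Matrix (Fin n) (Fin n) ℝ)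
              - (Matrix.single k k 1 : Matrix (Fin n) (Fin n) ℝ) * δγ u) * Ψ₀ u
            + (γ u * (Matrix.single k k 1 : Matrix (Fin n) (Fin n) ℝ)
                - (Matrix.single k k 1 : Matrix (Fin n) (Fin n) ℝ) * γ u) * δΨ₀ u) i j) :
    ∀ u ∈ U, ∀ i j : Fin n, i ≠ j →
      δγ u i j = -(Ψ₀ u * r * (Ψ₀ u)ᵀ) i j := by
  intro u hu i j hij
  have mem : U ∈ nhds u := hU.mem_nhds hu
  have hd0 : ∀ a b, DifferentiableAt ℝ (fun v => Ψ₀ v a b) u :=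
    fun a b => ((hΨ₀smooth a b).contDiffAt mem).differentiableAt (by simp)
  have hd1 : ∀ a b, DifferentiableAt ℝ (fun v => Ψ₁ v a b) u :=
    fun a b => ((hΨ₁smooth a b).contDiffAt mem).differentiableAt (by simp)
  have hd0t : ∀ a b, DifferentiableAt ℝ (fun v => (Ψ₀ v)ᵀ a b) u := fun a b => hd0 b a
  have hdr : ∀ a b, DifferentiableAt ℝ (fun v => (fun _ : Fin n → ℝ => r) v a b) u :=
    fun a b => differentiableAt_const _
  -- abbreviations
  set P := Ψ₀ u with hP
  set Q := Ψ₁ u with hQ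
  set G := γ u with hG
  set X := δγ u with hX
  set E : Matrix (Fin n) (Fin n) ℝ := Matrix.single j j 1 with hE
  set V : Matrix (Fin n) (Fin n) ℝ := G * E - E * G with hV
  -- matrix derivative identities at u in direction j
  have hD0 : matPd j Ψ₀ u = V * P := by
    ext a b; exact hΨ₀eq u hu j a b
  have hD1 : matPd j Ψ₁ u = E * P + V * Q := by
    ext a b; exact hΨ₁eq u hu j a b
  have hDδ : matPd j δΨ₀ u = (X * E - E * X) * P + V * δΨ₀ u := by
    ext a b; exact hlin u hu j a b
  -- entrywise differentiability of the intermediate products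
  have hent2 : ∀ a b, DifferentiableAt ℝ (fun v => (Ψ₀ v * r) a b) u :=
    entryDiff_mul (f := Ψ₀) (g := fun _ => r) hd0 hdr
  have hent3 : ∀ a b, DifferentiableAt ℝ (fun v => (Ψ₀ v * r * (Ψ₀ v)ᵀ) a b) u :=
    entryDiff_mul (f := fun v => Ψ₀ v * r) (g := fun v => (Ψ₀ v)ᵀ) hent2 hd0t
  have hent4 : ∀ a b, DifferentiableAt ℝ (fun v => (Ψ₀ v * r * (Ψ₀ v)ᵀ * Ψ₁ v) a b) u :=
    entryDiff_mul (f := fun v => Ψ₀ v * r * (Ψ₀ v)ᵀ) (g := Ψ₁) hent3 hd1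
  have hent1 : ∀ a b, DifferentiableAt ℝ (fun v => (Ψ₁ v * r) a b) u :=
    entryDiff_mul (f := Ψ₁) (g := fun _ => r) hd1 hdr
  -- compute matPd of δΨ₀ from the explicit formula
  have e1 : matPd j (fun v => Ψ₁ v * r) u = matPd j Ψ₁ u * r := by
    rw [matPd_mul (f := Ψ₁) (g := fun _ => r) hd1 hdr, matPd_const]
    simp
  have e2 : matPd j (fun v => Ψ₀ v * r) u = matPd j Ψ₀ u * r := by
    rw [matPd_mul (f := Ψ₀) (g := fun _ => r) hd0 hdr, matPd_const]
    simp
  have e3 : matPd j (fun v => Ψ₀ v * r * (Ψ₀ v)ᵀ) u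
      = matPd j Ψ₀ u * r * Pᵀ + P * r * (matPd j Ψ₀ u)ᵀ := by
    rw [matPd_mul (f := fun v => Ψ₀ v * r) (g := fun v => (Ψ₀ v)ᵀ) hent2 hd0t, e2,
      matPd_transpose]
  have e4 : matPd j (fun v => Ψ₀ v * r * (Ψ₀ v)ᵀ * Ψ₁ v) u
      = (matPd j Ψ₀ u * r * Pᵀ + P * r * (matPd j Ψ₀ u)ᵀ) * Q
        + P * r * Pᵀ * matPd j Ψ₁ u := by
    rw [matPd_mul (f := fun v => Ψ₀ v * r * (Ψ₀ v)ᵀ) (g := Ψ₁) hent3 hd1, e3]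
  have e5 : matPd j δΨ₀ u
      = matPd j Ψ₁ u * r
        - ((matPd j Ψ₀ u * r * Pᵀ + P * r * (matPd j Ψ₀ u)ᵀ) * Q
            + P * r * Pᵀ * matPd j Ψ₁ u) := by
    rw [matPd_congr hU hu hδΨ₀ j,
      matPd_sub (f := fun v => Ψ₁ v * r) (g := fun v => Ψ₀ v * r * (Ψ₀ v)ᵀ * Ψ₁ v) hent1 hent4,
      e1, e4]
  -- the main identity
  have main : (X * E - E * X) * P + V * (Q * r - P * r * Pᵀ * Q)
      = (E * P + V * Q) * r
        - (((V * P) * r * Pᵀ + P * r * (V * P)ᵀ) * Q + P * r * Pᵀ * (E * P + V * Q)) := by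
    have h := hDδ.symm.trans e5
    rw [hD0, hD1, hδΨ₀ u hu] at h
    exact h
  have hVt : Vᵀ = -V := Vt_neg G (fun a b hab => hγsym u hu a b hab) j
  have ht : (V * P)ᵀ = Pᵀ * -V := by rw [Matrix.transpose_mul, hVt]
  rw [ht] at main
  have h2 : (X * E - E * X) * P = E * (P * r) - P * r * Pᵀ * (E * P) := by
    calc (X * E - E * X) * P
        = ((X * E - E * X) * P + V * (Q * r - P * r * Pᵀ * Q))
            - V * (Q * r - P * r * Pᵀ * Q) := by noncomm_ring
      _ = ((E * P + V * Q) * r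
            - (((V * P) * r * Pᵀ + P * r * (Pᵀ * -V)) * Q + P * r * Pᵀ * (E * P + V * Q)))
            - V * (Q * r - P * r * Pᵀ * Q) := by rw [main]
      _ = E * (P * r) - P * r * Pᵀ * (E * P) := by noncomm_ring
  have key : X * E - E * X = E * (P * r * Pᵀ) - P * r * Pᵀ * E := by
    calc X * E - E * X = (X * E - E * X) * (P * Pᵀ) := by
          rw [horth₀' u hu, mul_one]
      _ = ((X * E - E * X) * P) * Pᵀ := by noncomm_ring
      _ = (E * (P * r) - P * r * Pᵀ * (E * P)) * Pᵀ := by rw [h2]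
      _ = E * (P * r * Pᵀ) - P * r * Pᵀ * (E * (P * Pᵀ)) := by noncomm_ring
      _ = E * (P * r * Pᵀ) - P * r * Pᵀ * E := by rw [horth₀' u hu, mul_one]
  have hent := congrArg (fun M => M i j) key
  simp only [Matrix.sub_apply, hE] at hent
  rw [Matrix.mul_single_apply_same,
    Matrix.single_mul_apply_of_ne _ _ _ _ _ hij,
    Matrix.single_mul_apply_of_ne _ _ _ _ _ hij,
    Matrix.mul_single_apply_same] at hent
  have : X i j = -(P * r * Pᵀ) i j := by
    have := hent
    simp only [mul_one] at this
    linarith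
  simpa [Matrix.neg_apply] using this
end

section
/- Let g, m ≥ 1. Let B and M be constant symmetric g×g real matrices, ω a constant g×m real matrix, and γ₀ a constant m×m real matrix. Let I := { ε ∈ ℝ : 1 + ε·B·M is invertible }, an open subset of ℝ. Define on I: B(ε) := (1+εBM)⁻¹·B, ω(ε) := (1+εBM)⁻¹·ω, and γ(ε) := γ₀ − ε·ωᵀ·M·(1+εBM)⁻¹·ω. Then these functions are differentiable on I and for every ε ∈ I: dB(ε)/dε = −B(ε)·M·B(ε), dω(ε)/dε = −B(ε)·M·ω(ε), and dγ(ε)/dε = −ω(ε)ᵀ·M·ω(ε). Moreover B(0) = B, ω(0) = ω, γ(0) = γ₀. -/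
/-!
Write `N(ε) = (1 + εBM)⁻¹`. The derivative of inversion gives `N' = -N (BM) N`, which is
already the `B` and `ω` equations. For `γ`, the product rule gives `-ωᵀ M (N - ε N BM N) ω`,
and `(1 + εBM) N = 1` turns the bracket into `N N`. Finally, symmetry of `B` and `M` gives
`M (1 + εBM) = (1 + εBM)ᵀ M`, hence `Nᵀ M = M N`, so `ωᵀ M N N ω = (N ω)ᵀ M (N ω)`.
-/

open Matrix

-- Matrices have no global norm; any norm gives the same entrywise derivatives, and the
-- `ℓ∞` operator norm is one making square matrices a normed algebra.
attribute [local instance] Matrix.linftyOpNormedAddCommGroup Matrix.linftyOpNormedSpace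
  Matrix.linftyOpNormedRing Matrix.linftyOpNormedAlgebra

section Calculus

variable {𝕜 : Type*} [NontriviallyNormedField 𝕜] {x : 𝕜}

theorem HasDerivAt.ringInverse {R : Type*} [NormedRing R] [HasSummableGeomSeries R]
    [NormedAlgebra 𝕜 R] {f : 𝕜 → R} {f' : R} (hf : HasDerivAt f f' x) (hx : IsUnit (f x)) :
    HasDerivAt (fun t => Ring.inverse (f t))
      (-(Ring.inverse (f x) * f' * Ring.inverse (f x))) x := by
  obtain ⟨u, hu⟩ := hx
  have hinv := hasFDerivAt_ringInverse (𝕜 := 𝕜) u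
  rw [hu] at hinv
  rw [← hu, Ring.inverse_unit]
  refine (hinv.comp_hasDerivAt x hf).congr_deriv ?_
  simp [mul_assoc]

theorem LinearMap.comp_hasDerivAt [CompleteSpace 𝕜] {E F : Type*} [NormedAddCommGroup E]
    [NormedSpace 𝕜 E] [FiniteDimensional 𝕜 E] [NormedAddCommGroup F] [NormedSpace 𝕜 F]
    (L : E →ₗ[𝕜] F) {f : 𝕜 → E} {f' : E} (hf : HasDerivAt f f' x) :
    HasDerivAt (fun t => L (f t)) (L f') x :=
  (LinearMap.toContinuousLinearMap L).hasFDerivAt.comp_hasDerivAt x hf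

end Calculus

namespace Matrix

section Algebra

variable {α : Type*} [CommRing α] {n : Type*} [Fintype n] [DecidableEq n]

theorem transpose_inv_mul_eq_mul_inv {A M : Matrix n n α} (hA : IsUnit A.det)
    (h : M * A = Aᵀ * M) : A⁻¹ᵀ * M = M * A⁻¹ := by
  have hAT : IsUnit Aᵀ.det := by rwa [det_transpose]
  calc A⁻¹ᵀ * M = Aᵀ⁻¹ * (M * A) * A⁻¹ := by
        rw [transpose_nonsing_inv, Matrix.mul_assoc, Matrix.mul_assoc, mul_nonsing_inv A hA,
          Matrix.mul_one]
    _ = M * A⁻¹ := by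
        rw [h, ← Matrix.mul_assoc, nonsing_inv_mul _ hAT, Matrix.one_mul]

theorem transpose_inv_one_add_smul_mul_mul {B M : Matrix n n α} (hB : Bᵀ = B) (hM : Mᵀ = M)
    (c : α) (h : IsUnit (1 + c • (B * M))) :
    (1 + c • (B * M))⁻¹ᵀ * M = M * (1 + c • (B * M))⁻¹ := by
  refine transpose_inv_mul_eq_mul_inv ((isUnit_iff_isUnit_det _).mp h) ?_
  simp only [transpose_add, transpose_one, transpose_smul, transpose_mul, hB, hM, Matrix.mul_add,
    Matrix.add_mul, Matrix.mul_one, Matrix.one_mul, Matrix.mul_smul, Matrix.smul_mul,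
    Matrix.mul_assoc]

theorem inv_one_add_smul_sub_smul_eq_inv_mul_inv (A : Matrix n n α) (c : α)
    (h : IsUnit (1 + c • A)) :
    (1 + c • A)⁻¹ - c • ((1 + c • A)⁻¹ * A * (1 + c • A)⁻¹)
      = (1 + c • A)⁻¹ * (1 + c • A)⁻¹ := by
  set N := (1 + c • A)⁻¹
  have hN : N + c • (A * N) = 1 := by
    rw [← mul_nonsing_inv _ ((isUnit_iff_isUnit_det _).mp h), Matrix.add_mul, Matrix.one_mul,
      Matrix.smul_mul]
  calc N - c • (N * A * N) = N * (1 - c • (A * N)) := by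
        rw [Matrix.mul_sub, Matrix.mul_one, Matrix.mul_smul, Matrix.mul_assoc]
    _ = N * N := by rw [← hN, add_sub_cancel_right]

end Algebra

section Calculus

variable {𝕜 : Type*} [RCLike 𝕜] {x : 𝕜} {l m n : Type*} [Fintype l] [Fintype m] [Fintype n]

theorem hasDerivAt_apply {f : 𝕜 → Matrix m n 𝕜} {f' : Matrix m n 𝕜} (hf : HasDerivAt f f' x)
    (i : m) (j : n) : HasDerivAt (fun t => f t i j) (f' i j) x :=
  (entryLinearMap 𝕜 𝕜 i j).comp_hasDerivAt hf

theorem hasDerivAt_mul_const {f : 𝕜 → Matrix l m 𝕜} {f' : Matrix l m 𝕜} (hf : HasDerivAt f f' x)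
    (C : Matrix m n 𝕜) : HasDerivAt (fun t => f t * C) (f' * C) x :=
  (mulRightLinearMap l 𝕜 C).comp_hasDerivAt hf

theorem hasDerivAt_const_mul {f : 𝕜 → Matrix m n 𝕜} {f' : Matrix m n 𝕜} (hf : HasDerivAt f f' x)
    (C : Matrix l m 𝕜) : HasDerivAt (fun t => C * f t) (C * f') x :=
  (mulLeftLinearMap n 𝕜 C).comp_hasDerivAt hf

variable [DecidableEq n]

theorem hasDerivAt_inv {f : 𝕜 → Matrix n n 𝕜} {f' : Matrix n n 𝕜} (hf : HasDerivAt f f' x)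
    (hx : IsUnit (f x)) : HasDerivAt (fun t => (f t)⁻¹) (-((f x)⁻¹ * f' * (f x)⁻¹)) x := by
  simp only [nonsing_inv_eq_ringInverse]
  exact hf.ringInverse hx

theorem hasDerivAt_inv_one_add_smul (A : Matrix n n 𝕜) (hx : IsUnit (1 + x • A)) :
    HasDerivAt (fun t => (1 + t • A)⁻¹) (-((1 + x • A)⁻¹ * A * (1 + x • A)⁻¹)) x := by
  have h : HasDerivAt (fun t : 𝕜 => 1 + t • A) A x := by
    have := ((hasDerivAt_id' x).smul_const A).const_add (1 : Matrix n n 𝕜)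
    rw [one_smul] at this
    exact this
  exact hasDerivAt_inv h hx

theorem hasDerivAt_inv_one_add_smul_mul (A : Matrix n n 𝕜)
    (C : Matrix n m 𝕜) (hx : IsUnit (1 + x • A)) :
    HasDerivAt (fun t => (1 + t • A)⁻¹ * C) (-((1 + x • A)⁻¹ * A * ((1 + x • A)⁻¹ * C))) x := by
  simpa only [Matrix.neg_mul, Matrix.mul_assoc] using
    hasDerivAt_mul_const (hasDerivAt_inv_one_add_smul A hx) C

theorem hasDerivAt_smul_mul_inv_one_add_smul_mul (D : Matrix l n 𝕜)
    (A : Matrix n n 𝕜) (C : Matrix n m 𝕜) (hx : IsUnit (1 + x • A)) :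
    HasDerivAt (fun t => t • (D * (1 + t • A)⁻¹ * C))
      (D * ((1 + x • A)⁻¹ * (1 + x • A)⁻¹) * C) x := by
  have h := (hasDerivAt_id' x).smul
    (hasDerivAt_const_mul (hasDerivAt_mul_const (hasDerivAt_inv_one_add_smul A hx) C) D)
  refine (h.congr_deriv ?_).congr_of_eventuallyEq ?_
  · rw [← inv_one_add_smul_sub_smul_eq_inv_mul_inv A x hx]
    simp only [Matrix.mul_sub, Matrix.sub_mul, Matrix.mul_smul, Matrix.smul_mul, Matrix.neg_mul,
      Matrix.mul_neg, one_smul, smul_neg, Matrix.mul_assoc]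
    abel
  · exact Filter.Eventually.of_forall fun t => congrArg (t • ·) (Matrix.mul_assoc D _ C)

theorem isOpen_setOf_isUnit_one_add_smul (A : Matrix n n 𝕜) :
    IsOpen {t : 𝕜 | IsUnit (1 + t • A)} :=
  Units.isOpen.preimage (by fun_prop)

end Calculus

end Matrix

theorem explicit_integration_special_deformation_general
    {g m : ℕ}
    (B M : Matrix (Fin g) (Fin g) ℝ) (hB : Bᵀ = B) (hM : Mᵀ = M)
    (ω : Matrix (Fin g) (Fin m) ℝ) (γ₀ : Matrix (Fin m) (Fin m) ℝ) :
    IsOpen {ε : ℝ | IsUnit (1 + ε • (B * M))} ∧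
    (∀ ε ∈ {ε : ℝ | IsUnit (1 + ε • (B * M))}, ∀ i j : Fin g,
      HasDerivAt (fun e : ℝ => ((1 + e • (B * M))⁻¹ * B) i j)
        ((-(((1 + ε • (B * M))⁻¹ * B) * M * ((1 + ε • (B * M))⁻¹ * B))) i j) ε) ∧
    (∀ ε ∈ {ε : ℝ | IsUnit (1 + ε • (B * M))}, ∀ (i : Fin g) (j : Fin m),
      HasDerivAt (fun e : ℝ => ((1 + e • (B * M))⁻¹ * ω) i j)
        ((-(((1 + ε • (B * M))⁻¹ * B) * M * ((1 + ε • (B * M))⁻¹ * ω))) i j) ε) ∧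
    (∀ ε ∈ {ε : ℝ | IsUnit (1 + ε • (B * M))}, ∀ i j : Fin m,
      HasDerivAt (fun e : ℝ => (γ₀ - e • (ωᵀ * M * (1 + e • (B * M))⁻¹ * ω)) i j)
        ((-(((1 + ε • (B * M))⁻¹ * ω)ᵀ * M * ((1 + ε • (B * M))⁻¹ * ω))) i j) ε) ∧
    ((1 + (0 : ℝ) • (B * M))⁻¹ * B = B) ∧
    ((1 + (0 : ℝ) • (B * M))⁻¹ * ω = ω) ∧
    (γ₀ - (0 : ℝ) • (ωᵀ * M * (1 + (0 : ℝ) • (B * M))⁻¹ * ω) = γ₀) := by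
  refine ⟨isOpen_setOf_isUnit_one_add_smul _, fun ε hε i j => ?_, fun ε hε i j => ?_,
    fun ε hε i j => ?_, by simp, by simp, by simp⟩
  · refine hasDerivAt_apply ?_ i j
    simpa only [Matrix.mul_assoc] using hasDerivAt_inv_one_add_smul_mul (B * M) B hε
  · refine hasDerivAt_apply ?_ i j
    simpa only [Matrix.mul_assoc] using hasDerivAt_inv_one_add_smul_mul (B * M) ω hε
  · refine hasDerivAt_apply ?_ i j
    have hsymm := transpose_inv_one_add_smul_mul_mul hB hM ε hε
    refine ((hasDerivAt_smul_mul_inv_one_add_smul_mul (ωᵀ * M) (B * M) ω hε).const_sub γ₀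
      ).congr_deriv ?_
    rw [transpose_mul, Matrix.mul_assoc ωᵀ _ M, hsymm]
    simp only [Matrix.mul_assoc]

/-- Explicit integration of the constant special Givental–van de Leur vector field:
`B(ε) = (1+εBM)⁻¹B`, `ω(ε) = (1+εBM)⁻¹ω`, `γ(ε) = γ₀ − ε ωᵀ M (1+εBM)⁻¹ ω` solve the ODE
system `dB/dε = −BMB`, `dω/dε = −BMω`, `dγ/dε = −ωᵀMω` with the given initial values, on
the open set where `1+εBM` is invertible. -/
theorem explicit_integration_special_deformation
    {g m : ℕ} (hg : 1 ≤ g) (hm : 1 ≤ m)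
    (B M : Matrix (Fin g) (Fin g) ℝ) (hB : Bᵀ = B) (hM : Mᵀ = M)
    (ω : Matrix (Fin g) (Fin m) ℝ) (γ₀ : Matrix (Fin m) (Fin m) ℝ) :
    IsOpen {ε : ℝ | IsUnit (1 + ε • (B * M))} ∧
    (∀ ε ∈ {ε : ℝ | IsUnit (1 + ε • (B * M))}, ∀ i j : Fin g,
      HasDerivAt (fun e : ℝ => ((1 + e • (B * M))⁻¹ * B) i j)
        ((-(((1 + ε • (B * M))⁻¹ * B) * M * ((1 + ε • (B * M))⁻¹ * B))) i j) ε) ∧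
    (∀ ε ∈ {ε : ℝ | IsUnit (1 + ε • (B * M))}, ∀ (i : Fin g) (j : Fin m),
      HasDerivAt (fun e : ℝ => ((1 + e • (B * M))⁻¹ * ω) i j)
        ((-(((1 + ε • (B * M))⁻¹ * B) * M * ((1 + ε • (B * M))⁻¹ * ω))) i j) ε) ∧
    (∀ ε ∈ {ε : ℝ | IsUnit (1 + ε • (B * M))}, ∀ i j : Fin m,
      HasDerivAt (fun e : ℝ => (γ₀ - e • (ωᵀ * M * (1 + e • (B * M))⁻¹ * ω)) i j)
        ((-(((1 + ε • (B * M))⁻¹ * ω)ᵀ * M * ((1 + ε • (B * M))⁻¹ * ω))) i j) ε) ∧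
    ((1 + (0 : ℝ) • (B * M))⁻¹ * B = B) ∧
    ((1 + (0 : ℝ) • (B * M))⁻¹ * ω = ω) ∧
    (γ₀ - (0 : ℝ) • (ωᵀ * M * (1 + (0 : ℝ) • (B * M))⁻¹ * ω) = γ₀) :=
  explicit_integration_special_deformation_general B M hB hM ω γ₀
end

section
/- Let n, g ≥ 1 and let U ⊆ ℝⁿ be open with coordinates u₁,…,uₙ. Let ω : U → Matrix (Fin g) (Fin n) ℝ be smooth, let B : U → Matrix (Fin g) (Fin g) ℝ be smooth with B(u) symmetric for all u and satisfying the B-equation with respect to ω, i.e. ∂B/∂u_k = ω·E_kk·ωᵀ for every k. Let M be a constant symmetric g×g real matrix and fix ε ∈ ℝ such that 1 + ε·B(u)·M is invertible for every u ∈ U. Define ω_ε := (1+εBM)⁻¹·ω and B_ε := (1+εBM)⁻¹·B. Then B_ε satisfies the B-equation with respect to ω_ε, i.e. ∂B_ε/∂u_k = ω_ε·E_kk·ω_εᵀ for every k. -/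
open Matrix

section Helpers

variable {n : ℕ} {u : Fin n → ℝ} {k : Fin n}

lemma pd_congr {f h : (Fin n → ℝ) → ℝ} (he : f =ᶠ[nhds u] h) : pd k f u = pd k h u := by
  unfold pd; rw [he.fderiv_eq]

lemma pd_const (c : ℝ) : pd k (fun _ => c) u = 0 := by
  simp [pd]

lemma pd_sum {ι : Type*} (s : Finset ι) (f : ι → (Fin n → ℝ) → ℝ)
    (h : ∀ i ∈ s, DifferentiableAt ℝ (f i) u) :
    pd k (fun v => ∑ i ∈ s, f i v) u = ∑ i ∈ s, pd k (f i) u := by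
  unfold pd
  rw [fderiv_fun_sum h]
  simp

lemma pd_mul {f h : (Fin n → ℝ) → ℝ} (hf : DifferentiableAt ℝ f u)
    (hh : DifferentiableAt ℝ h u) :
    pd k (fun v => f v * h v) u = pd k f u * h u + f u * pd k h u := by
  unfold pd
  rw [fderiv_fun_mul hf hh]
  simp only [ContinuousLinearMap.add_apply, ContinuousLinearMap.smul_apply, smul_eq_mul]
  ring

lemma pd_add {f h : (Fin n → ℝ) → ℝ} (hf : DifferentiableAt ℝ f u)
    (hh : DifferentiableAt ℝ h u) :
    pd k (fun v => f v + h v) u = pd k f u + pd k h u := by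
  unfold pd
  rw [fderiv_fun_add hf hh]
  simp

lemma pd_const_mul {f : (Fin n → ℝ) → ℝ} (hf : DifferentiableAt ℝ f u) (c : ℝ) :
    pd k (fun v => c * f v) u = c * pd k f u := by
  unfold pd
  rw [fderiv_const_mul hf c]
  simp

lemma pd_mul_const {f : (Fin n → ℝ) → ℝ} (hf : DifferentiableAt ℝ f u) (c : ℝ) :
    pd k (fun v => f v * c) u = pd k f u * c := by
  unfold pd
  rw [fderiv_mul_const hf c]
  simp only [ContinuousLinearMap.smul_apply, smul_eq_mul]
  ring

lemma diffAt_det {m : ℕ} {A : (Fin n → ℝ) → Matrix (Fin m) (Fin m) ℝ}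
    (h : ∀ i j, DifferentiableAt ℝ (fun v => A v i j) u) :
    DifferentiableAt ℝ (fun v => (A v).det) u := by
  simp only [Matrix.det_apply']
  refine DifferentiableAt.fun_sum fun σ _ => DifferentiableAt.const_mul ?_ _
  exact (HasFDerivAt.finset_prod (u := Finset.univ) (g := fun i v => A v (σ i) i)
      (fun i _ => (h (σ i) i).hasFDerivAt)).differentiableAt

lemma diffAt_adjugate {m : ℕ} {A : (Fin n → ℝ) → Matrix (Fin m) (Fin m) ℝ}
    (h : ∀ i j, DifferentiableAt ℝ (fun v => A v i j) u) (a c : Fin m) :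
    DifferentiableAt ℝ (fun v => (A v).adjugate a c) u := by
  simp only [Matrix.adjugate_apply]
  refine diffAt_det fun i j => ?_
  rcases eq_or_ne i c with rfl | hic
  · simp only [Matrix.updateRow_self]
    exact differentiableAt_const _
  · simp only [Matrix.updateRow_ne hic]
    exact h i j

lemma diffAt_inv_entry {m : ℕ} {A : (Fin n → ℝ) → Matrix (Fin m) (Fin m) ℝ}
    (h : ∀ i j, DifferentiableAt ℝ (fun v => A v i j) u)
    (hdet : (A u).det ≠ 0) (a c : Fin m) :
    DifferentiableAt ℝ (fun v => (A v)⁻¹ a c) u := by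
  simp only [Matrix.inv_def, Matrix.smul_apply, smul_eq_mul, Ring.inverse_eq_inv]
  exact ((diffAt_det h).inv hdet).mul (diffAt_adjugate h a c)

end Helpers

/-- Auxiliary general form of the theorem, with the matrix `1 + ε • (B v * M)`
abstracted as a function `G`. -/
theorem deformed_B_equation_aux
    {n g : ℕ}
    (U : Set (Fin n → ℝ)) (hU : IsOpen U)
    (ω : (Fin n → ℝ) → Matrix (Fin g) (Fin n) ℝ)
    (B : (Fin n → ℝ) → Matrix (Fin g) (Fin g) ℝ)
    (hBsmooth : ∀ i j, ContDiffOn ℝ (⊤ : ℕ∞) (fun u => B u i j) U)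
    (hBsym : ∀ u ∈ U, (B u)ᵀ = B u)
    (M : Matrix (Fin g) (Fin g) ℝ) (hMsym : Mᵀ = M)
    (ε : ℝ)
    (G : (Fin n → ℝ) → Matrix (Fin g) (Fin g) ℝ)
    (hGdef : ∀ v, G v = 1 + ε • (B v * M))
    (hinv : ∀ u ∈ U, IsUnit (G u))
    (u : Fin n → ℝ) (hu : u ∈ U) (k : Fin n)
    (hBeq : ∀ a b : Fin g,
      pd k (fun v => B v a b) u
        = (ω u * (Matrix.single k k 1 : Matrix (Fin n) (Fin n) ℝ) * (ω u)ᵀ) a b)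
    (a b : Fin g) :
    pd k (fun v => ((G v)⁻¹ * B v) a b) u
      = ((G u)⁻¹ * ω u * (Matrix.single k k 1 : Matrix (Fin n) (Fin n) ℝ)
          * ((G u)⁻¹ * ω u)ᵀ) a b := by
  classical
  set E : Matrix (Fin n) (Fin n) ℝ := Matrix.single k k 1 with hE
  set P : Matrix (Fin g) (Fin g) ℝ := ω u * E * (ω u)ᵀ with hP
  -- basic differentiability facts
  have hBdiff : ∀ i j, DifferentiableAt ℝ (fun v => B v i j) u := fun i j =>
    ((hBsmooth i j).contDiffAt (hU.mem_nhds hu)).differentiableAt (by simp)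
  have hGentry : ∀ v i j, G v i j
      = (1 : Matrix (Fin g) (Fin g) ℝ) i j + ε * ∑ d, B v i d * M d j := by
    intro v i j
    rw [hGdef]
    simp [Matrix.add_apply, Matrix.smul_apply, Matrix.mul_apply]
  have hGdiff : ∀ i j, DifferentiableAt ℝ (fun v => G v i j) u := by
    intro i j
    have hfun : (fun v => G v i j)
        = fun v => (1 : Matrix (Fin g) (Fin g) ℝ) i j + ε * ∑ d, B v i d * M d j := by
      funext v; exact hGentry v i j
    rw [hfun]
    exact (differentiableAt_const _).add
      ((DifferentiableAt.fun_sum fun d _ => (hBdiff i d).mul_const _).const_mul _)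
  have hdet : ∀ v ∈ U, IsUnit (G v).det := fun v hv =>
    (Matrix.isUnit_iff_isUnit_det _).mp (hinv v hv)
  have hdetu : (G u).det ≠ 0 := (hdet u hu).ne_zero
  have hHdiff : ∀ a' c, DifferentiableAt ℝ (fun v => (G v)⁻¹ a' c) u :=
    fun a' c => diffAt_inv_entry hGdiff hdetu a' c
  -- derivative of the entries of G
  have hpdG : ∀ c b', pd k (fun v => G v c b') u = (ε • (P * M)) c b' := by
    intro c b'
    have hfun : (fun v => G v c b')
        = fun v => (1 : Matrix (Fin g) (Fin g) ℝ) c b' + ε * ∑ d, B v c d * M d b' := by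
      funext v; exact hGentry v c b'
    rw [hfun]
    have hs : DifferentiableAt ℝ (fun v => ∑ d, B v c d * M d b') u :=
      DifferentiableAt.fun_sum fun d _ => (hBdiff c d).mul_const _
    rw [pd_add (differentiableAt_const _) (hs.const_mul _), pd_const,
      pd_const_mul hs, pd_sum _ _ (fun d _ => (hBdiff c d).mul_const _)]
    have : ∀ d, pd k (fun v => B v c d * M d b') u = P c d * M d b' := by
      intro d
      rw [pd_mul_const (hBdiff c d), hBeq c d]
    simp only [this]
    simp [Matrix.smul_apply, Matrix.mul_apply, Finset.mul_sum]
  -- the matrix of derivatives of the entries of G⁻¹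
  set D : Matrix (Fin g) (Fin g) ℝ :=
    Matrix.of (fun a' c => pd k (fun v => (G v)⁻¹ a' c) u) with hD
  have hDe : ∀ a' c, pd k (fun v => (G v)⁻¹ a' c) u = D a' c := fun _ _ => rfl
  have hGG : G u * (G u)⁻¹ = 1 := Matrix.mul_nonsing_inv _ (hdet u hu)
  have hDGmat : D * G u + (G u)⁻¹ * (ε • (P * M)) = 0 := by
    ext a' b'
    have key : pd k (fun v => ∑ c, (G v)⁻¹ a' c * G v c b') u = 0 := by
      have heq : (fun v => ∑ c, (G v)⁻¹ a' c * G v c b')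
          =ᶠ[nhds u] fun _ => (1 : Matrix (Fin g) (Fin g) ℝ) a' b' := by
        filter_upwards [hU.mem_nhds hu] with v hv
        have h1 : (G v)⁻¹ * G v = 1 := Matrix.nonsing_inv_mul _ (hdet v hv)
        rw [← Matrix.mul_apply, h1]
      rw [pd_congr heq, pd_const]
    rw [pd_sum _ _ (fun c _ => (hHdiff a' c).fun_mul (hGdiff c b'))] at key
    have expand : ∀ c, pd k (fun v => (G v)⁻¹ a' c * G v c b') u
        = D a' c * G u c b' + (G u)⁻¹ a' c * (ε • (P * M)) c b' := by
      intro c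
      rw [pd_mul (hHdiff a' c) (hGdiff c b'), hDe a' c, hpdG c b']
    rw [Finset.sum_congr rfl (fun c _ => expand c)] at key
    rw [Matrix.add_apply, Matrix.mul_apply, Matrix.mul_apply, Matrix.zero_apply,
      ← Finset.sum_add_distrib]
    exact key
  have hDval : D = -((G u)⁻¹ * (ε • (P * M)) * (G u)⁻¹) := by
    have h1 : D * G u = -((G u)⁻¹ * (ε • (P * M))) :=
      eq_neg_of_add_eq_zero_left hDGmat
    calc D = D * (G u * (G u)⁻¹) := by rw [hGG, mul_one]
      _ = D * G u * (G u)⁻¹ := by rw [mul_assoc]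
      _ = -((G u)⁻¹ * (ε • (P * M))) * (G u)⁻¹ := by rw [h1]
      _ = -((G u)⁻¹ * (ε • (P * M)) * (G u)⁻¹) := by rw [neg_mul]
  -- Step 2 : compute the derivative of the entries of G⁻¹ * B
  have step2 : pd k (fun v => ((G v)⁻¹ * B v) a b) u = (D * B u + (G u)⁻¹ * P) a b := by
    have hfun : (fun v => ((G v)⁻¹ * B v) a b)
        = fun v => ∑ c, (G v)⁻¹ a c * B v c b := by
      funext v; rw [Matrix.mul_apply]
    rw [hfun, pd_sum _ _ (fun c _ => (hHdiff a c).fun_mul (hBdiff c b))]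
    have expand : ∀ c, pd k (fun v => (G v)⁻¹ a c * B v c b) u
        = D a c * B u c b + (G u)⁻¹ a c * P c b := by
      intro c
      rw [pd_mul (hHdiff a c) (hBdiff c b), hDe a c, hBeq c b]
    rw [Finset.sum_congr rfl (fun c _ => expand c), Finset.sum_add_distrib,
      Matrix.add_apply, Matrix.mul_apply, Matrix.mul_apply]
  -- Step 3 : the key algebraic identity
  have hGT : (G u)ᵀ = 1 + ε • (M * B u) := by
    rw [hGdef]
    rw [Matrix.transpose_add, Matrix.transpose_smul, Matrix.transpose_mul,
      hBsym u hu, hMsym, Matrix.transpose_one]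
  have hXY : (ε • (M * B u)) * (ε • (M * (G u)⁻¹ * B u))
      = ε • (M * B u) - ε • (M * (G u)⁻¹ * B u) := by
    have hBM : ε • (B u * M) = G u - 1 := by rw [hGdef]; abel
    have h1 : (ε • (M * B u)) * (ε • (M * (G u)⁻¹ * B u))
        = ε • (M * (ε • (B u * M)) * ((G u)⁻¹ * B u)) := by
      simp only [Matrix.mul_smul, Matrix.smul_mul, smul_smul]
      congr 1
      noncomm_ring
    have h3 : M * G u * ((G u)⁻¹ * B u) = M * B u := by
      rw [mul_assoc, ← mul_assoc (G u), hGG, one_mul]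
    have h2 : M * (G u - 1) * ((G u)⁻¹ * B u) = M * B u - M * ((G u)⁻¹ * B u) := by
      rw [mul_sub, mul_one, sub_mul, h3]
    rw [h1, hBM, h2, smul_sub, ← mul_assoc]
  have hGTinv : ((G u)ᵀ)⁻¹ = 1 - ε • (M * (G u)⁻¹ * B u) := by
    apply Matrix.inv_eq_right_inv
    rw [hGT, add_mul, one_mul, mul_sub, mul_one, hXY]
    abel
  -- assemble
  have hmat : D * B u + (G u)⁻¹ * P
      = (G u)⁻¹ * ω u * E * ((G u)⁻¹ * ω u)ᵀ := by
    have hRHS : (G u)⁻¹ * ω u * E * ((G u)⁻¹ * ω u)ᵀ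
        = (G u)⁻¹ * P * ((G u)ᵀ)⁻¹ := by
      rw [Matrix.transpose_mul, Matrix.transpose_nonsing_inv, hP]
      simp only [Matrix.mul_assoc]
    have hassoc : (G u)⁻¹ * (ε • (P * M)) * (G u)⁻¹ * B u
        = ε • ((G u)⁻¹ * P * (M * (G u)⁻¹ * B u)) := by
      simp only [Matrix.mul_smul, Matrix.smul_mul]
      congr 1
      noncomm_ring
    rw [hRHS, hGTinv, hDval, neg_mul, hassoc, mul_sub, mul_one, Matrix.mul_smul]
    abel
  rw [step2, hmat]

/-- The deformed matrix `B_ε = (1+εBM)⁻¹B` satisfies the B-equation with respect to the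
deformed matrix `ω_ε = (1+εBM)⁻¹ω`. -/
theorem deformed_B_equation
    {n g : ℕ} (hn : 1 ≤ n) (hg : 1 ≤ g)
    (U : Set (Fin n → ℝ)) (hU : IsOpen U)
    (ω : (Fin n → ℝ) → Matrix (Fin g) (Fin n) ℝ)
    (hωsmooth : ∀ i j, ContDiffOn ℝ (⊤ : ℕ∞) (fun u => ω u i j) U)
    (B : (Fin n → ℝ) → Matrix (Fin g) (Fin g) ℝ)
    (hBsmooth : ∀ i j, ContDiffOn ℝ (⊤ : ℕ∞) (fun u => B u i j) U)
    (hBsym : ∀ u ∈ U, (B u)ᵀ = B u)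
    (hBeq : ∀ u ∈ U, ∀ k : Fin n, ∀ a b : Fin g,
      pd k (fun v => B v a b) u
        = (ω u * (Matrix.single k k 1 : Matrix (Fin n) (Fin n) ℝ) * (ω u)ᵀ) a b)
    (M : Matrix (Fin g) (Fin g) ℝ) (hMsym : Mᵀ = M)
    (ε : ℝ) (hinv : ∀ u ∈ U, IsUnit (1 + ε • (B u * M))) :
    ∀ u ∈ U, ∀ k : Fin n, ∀ a b : Fin g,
      pd k (fun v => ((1 + ε • (B v * M))⁻¹ * B v) a b) u
        = ((1 + ε • (B u * M))⁻¹ * ω u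
            * (Matrix.single k k 1 : Matrix (Fin n) (Fin n) ℝ)
            * ((1 + ε • (B u * M))⁻¹ * ω u)ᵀ) a b := by
  intro u hu k a b
  exact deformed_B_equation_aux U hU ω B hBsmooth hBsym M hMsym ε
    (fun v => 1 + ε • (B v * M)) (fun v => rfl) hinv u hu k (hBeq u hu k) a b
end

section
/- Let n ≥ 1 and let U ⊆ ℝⁿ be open with coordinates u₁,…,uₙ. Let γ : U → Matrix (Fin n) (Fin n) ℝ be smooth with γᵢⱼ = γⱼᵢ for i ≠ j, and let Ψ₀ : U → Matrix (Fin n) (Fin n) ℝ be smooth satisfying: ∂(Ψ₀)ᵢⱼ/∂u_k = γᵢₖ·(Ψ₀)ₖⱼ for all i, j, k with i ≠ k, and ∑_{k=1}^n ∂(Ψ₀)ᵢⱼ/∂u_k = 0 for all i, j. Then for every k and every u ∈ U, ∂(Ψ₀ᵀ·Ψ₀)/∂u_k = 0; in particular, Ψ₀ᵀ·Ψ₀ is locally constant on U. -/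
open Matrix

/-- For a solution `Ψ₀` of the linear system attached to a solution `γ` of the Darboux–Egoroff
equations, `Ψ₀ᵀ Ψ₀` has vanishing partial derivatives, hence is locally constant on `U`. -/
theorem psi_orthogonality_locally_constant
    {n : ℕ} (hn : 1 ≤ n)
    (U : Set (Fin n → ℝ)) (hU : IsOpen U)
    (γ : (Fin n → ℝ) → Matrix (Fin n) (Fin n) ℝ)
    (hγsmooth : ∀ i j, ContDiffOn ℝ (⊤ : ℕ∞) (fun u => γ u i j) U)
    (hγsym : ∀ u ∈ U, ∀ i j : Fin n, i ≠ j → γ u i j = γ u j i)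
    (Ψ₀ : (Fin n → ℝ) → Matrix (Fin n) (Fin n) ℝ)
    (hΨ₀smooth : ∀ i j, ContDiffOn ℝ (⊤ : ℕ∞) (fun u => Ψ₀ u i j) U)
    (heq1 : ∀ u ∈ U, ∀ i j k : Fin n, i ≠ k →
      pd k (fun v => Ψ₀ v i j) u = γ u i k * Ψ₀ u k j)
    (heq2 : ∀ u ∈ U, ∀ i j : Fin n,
      ∑ k : Fin n, pd k (fun v => Ψ₀ v i j) u = 0) :
    (∀ u ∈ U, ∀ k i j : Fin n,
      pd k (fun v => ((Ψ₀ v)ᵀ * Ψ₀ v) i j) u = 0) ∧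
    (∀ i j : Fin n,
      IsLocallyConstant (fun u : U => ((Ψ₀ u.1)ᵀ * Ψ₀ u.1) i j)) := by
  have hd : ∀ u ∈ U, ∀ l i : Fin n, DifferentiableAt ℝ (fun v => Ψ₀ v l i) u := by
    intro u hu l i
    exact ((hΨ₀smooth l i).differentiableOn (by simp)).differentiableAt (hU.mem_nhds hu)
  have hfun : ∀ i j : Fin n,
      (fun v => ((Ψ₀ v)ᵀ * Ψ₀ v) i j) = fun v => ∑ l, Ψ₀ v l i * Ψ₀ v l j := by
    intro i j; funext v; simp [Matrix.mul_apply, Matrix.transpose_apply]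
  have key : ∀ u ∈ U, ∀ k i j : Fin n,
      pd k (fun v => ((Ψ₀ v)ᵀ * Ψ₀ v) i j) u = 0 := by
    intro u hu k i j
    have hkk : ∀ i : Fin n, pd k (fun v => Ψ₀ v k i) u
        = -∑ m ∈ Finset.univ.erase k, γ u k m * Ψ₀ u m i := by
      intro i
      have h0 := heq2 u hu k i
      rw [← Finset.sum_erase_add _ _ (Finset.mem_univ k)] at h0
      have h1 : ∑ m ∈ Finset.univ.erase k, pd m (fun v => Ψ₀ v k i) u
          = ∑ m ∈ Finset.univ.erase k, γ u k m * Ψ₀ u m i := by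
        refine Finset.sum_congr rfl fun m hm => ?_
        exact heq1 u hu k i m (Ne.symm (Finset.ne_of_mem_erase hm))
      rw [h1] at h0
      linarith
    have hsum : pd k (fun v => ((Ψ₀ v)ᵀ * Ψ₀ v) i j) u
        = ∑ l, (pd k (fun v => Ψ₀ v l i) u * Ψ₀ u l j
            + Ψ₀ u l i * pd k (fun v => Ψ₀ v l j) u) := by
      rw [hfun]
      unfold pd
      rw [fderiv_fun_sum (fun l _ => (hd u hu l i).fun_mul (hd u hu l j)),
        ContinuousLinearMap.sum_apply]
      refine Finset.sum_congr rfl fun l _ => ?_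
      rw [fderiv_fun_mul (hd u hu l i) (hd u hu l j)]
      simp only [ContinuousLinearMap.add_apply, ContinuousLinearMap.smul_apply,
        smul_eq_mul]
      ring
    rw [hsum, ← Finset.sum_erase_add _ _ (Finset.mem_univ k)]
    have hrest : ∑ l ∈ Finset.univ.erase k,
        (pd k (fun v => Ψ₀ v l i) u * Ψ₀ u l j + Ψ₀ u l i * pd k (fun v => Ψ₀ v l j) u)
        = (∑ l ∈ Finset.univ.erase k, γ u k l * Ψ₀ u l j) * Ψ₀ u k i
          + (∑ l ∈ Finset.univ.erase k, γ u k l * Ψ₀ u l i) * Ψ₀ u k j := by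
      rw [Finset.sum_mul, Finset.sum_mul, ← Finset.sum_add_distrib]
      refine Finset.sum_congr rfl fun l hl => ?_
      have hlk : l ≠ k := Finset.ne_of_mem_erase hl
      rw [heq1 u hu l i k hlk, heq1 u hu l j k hlk, hγsym u hu l k hlk]
      ring
    rw [hrest, hkk i, hkk j]
    ring
  refine ⟨key, fun i j => ?_⟩
  have hdiffAt : ∀ x ∈ U, DifferentiableAt ℝ (fun v => ((Ψ₀ v)ᵀ * Ψ₀ v) i j) x := by
    intro x hx
    rw [hfun]
    exact DifferentiableAt.fun_sum fun l _ => (hd x hx l i).mul (hd x hx l j)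
  have hfz : ∀ x ∈ U, fderiv ℝ (fun v => ((Ψ₀ v)ᵀ * Ψ₀ v) i j) x = 0 := by
    intro x hx
    ext w
    have hw : w = ∑ m : Fin n, w m • (Pi.single m (1 : ℝ) : Fin n → ℝ) := by
      funext r
      simp [Pi.single_apply, Finset.sum_apply, Finset.sum_ite_eq']
    rw [hw, map_sum]
    have : ∀ m : Fin n, (fderiv ℝ (fun v => ((Ψ₀ v)ᵀ * Ψ₀ v) i j) x)
        (w m • (Pi.single m (1 : ℝ) : Fin n → ℝ)) = 0 := by
      intro m
      rw [_root_.map_smul]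
      have := key x hx m i j
      unfold pd at this
      rw [this]
      simp
    simp [this]
  rw [IsLocallyConstant.iff_exists_open]
  rintro ⟨u, hu⟩
  obtain ⟨ε, hε, hball⟩ := Metric.isOpen_iff.1 hU u hu
  refine ⟨Subtype.val ⁻¹' Metric.ball u ε,
    Metric.isOpen_ball.preimage continuous_subtype_val, by simpa using hε, ?_⟩
  rintro ⟨v, hv⟩ hvb
  have hvb' : v ∈ Metric.ball u ε := hvb
  have humem : u ∈ Metric.ball u ε := Metric.mem_ball_self hε
  exact (convex_ball u ε).is_const_of_fderivWithin_eq_zero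
    (fun x hx => (hdiffAt x (hball hx)).differentiableWithinAt)
    (fun x hx => by
      rw [fderivWithin_of_isOpen Metric.isOpen_ball hx]
      exact hfz x (hball hx)) hvb' humem
end
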